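/- arXiv:1305.3899 — 6 statements merged into one kernel-verified Lean document; each statement's English description precedes it below -/
import Mathlib

section
/- Let γ denote the standard Gaussian measure N(0,1) on ℝ, let φ : ℝ → ℝ be of class C¹ with bounded derivative, and for t ∈ (0,1) define φ_t(x) = ∫_ℝ φ(√t·y + √(1−t)·x) dγ(y). Then φ_t is twice differentiable, for every x one has φ_t''(x) = ((1−t)/√t) ∫_ℝ y·φ'(√t·y + √(1−t)·x) dγ(y), and consequently sup_x |φ_t''(x)| ≤ √(2/π) · ((1−t)/√t) · sup_x|φ'(x)|. -/
/-!
Write `a = √t`, `b = √(1 - t)` and `γ = N(0,1)`. Differentiating under the integral gives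
`φ_t'(x) = b ∫ φ'(a y + b x) dγ(y)`, but `φ'` need not be differentiable. Stein's identity
`∫ y g(y) dγ = ∫ g'(y) dγ` (integration by parts against the density, whose derivative is
`-y` times itself) moves the derivative onto the Gaussian weight:
`φ_t'(x) = (b / a) ∫ y φ(a y + b x) dγ(y)`. This can be differentiated under the integral
once more, giving `φ_t''(x) = (b² / a) ∫ y φ'(a y + b x) dγ(y)`, and the bound follows from
`∫ |y| dγ = √(2/π)`.
-/

open MeasureTheory ProbabilityTheory Real Filter Set Topology
open scoped NNReal ENNReal

lemma hasDerivAt_gaussianPDFReal (μ : ℝ) (v : ℝ≥0) (y : ℝ) :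
    HasDerivAt (gaussianPDFReal μ v) (-(y - μ) / v * gaussianPDFReal μ v y) y := by
  have h : HasDerivAt (fun x => -(x - μ) ^ 2 / (2 * v)) (-(y - μ) / v) y :=
    (((hasDerivAt_id' y).sub_const μ).pow 2).neg.div_const (2 * (v : ℝ)) |>.congr_deriv
      (by push_cast; ring)
  exact (h.exp.const_mul (√(2 * π * v))⁻¹).congr_deriv (by rw [gaussianPDFReal]; ring)

lemma integrable_gaussianReal_iff {E : Type*} [NormedAddCommGroup E] [NormedSpace ℝ E]
    {μ : ℝ} {v : ℝ≥0} (hv : v ≠ 0) {f : ℝ → E} :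
    Integrable f (gaussianReal μ v) ↔ Integrable (fun x => gaussianPDFReal μ v x • f x) := by
  rw [gaussianReal_of_var_ne_zero μ hv,
    integrable_withDensity_iff_integrable_smul' (measurable_gaussianPDF μ v)
      (ae_of_all _ fun _ => gaussianPDF_lt_top)]
  simp only [toReal_gaussianPDF]

lemma LipschitzWith.comp_mul_add {K : ℝ≥0} {f : ℝ → ℝ} (hf : LipschitzWith K f)
    (a c : ℝ) :
    LipschitzWith (K * ‖a‖₊) (fun y => f (a * y + c)) := by
  have h := hf.comp ((lipschitzWith_smul a).add (LipschitzWith.const c))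
  rw [add_zero] at h
  exact h

lemma LipschitzWith.memLp_of_memLp_id {μ : Measure ℝ} [IsFiniteMeasure μ] {p : ℝ≥0∞}
    {K : ℝ≥0} {f : ℝ → ℝ} (hf : LipschitzWith K f) (hid : MemLp id p μ) :
    MemLp f p μ := by
  refine ((memLp_const |f 0|).add (hid.norm.const_mul K)).of_le
    hf.continuous.aestronglyMeasurable (ae_of_all _ fun y => ?_)
  have h := hf.dist_le_mul y 0
  rw [Real.dist_eq, Real.dist_eq, sub_zero] at h
  simp only [Pi.add_apply, id, Real.norm_eq_abs]
  calc |f y| ≤ |f 0| + |f y - f 0| := by linarith [abs_sub_abs_le_abs_sub (f y) (f 0)]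
    _ ≤ |f 0| + K * |y| := by linarith
    _ ≤ _ := le_abs_self _

lemma integrable_id_gaussianReal (μ : ℝ) (v : ℝ≥0) :
    Integrable (fun x => x) (gaussianReal μ v) :=
  memLp_one_iff_integrable.1 (memLp_id_gaussianReal' 1 (by simp))

section LipschitzGaussian

variable {μ : ℝ} {v K : ℝ≥0} {g : ℝ → ℝ}

lemma LipschitzWith.integrable_gaussianReal (hg : LipschitzWith K g) :
    Integrable g (gaussianReal μ v) :=
  memLp_one_iff_integrable.1 (hg.memLp_of_memLp_id (memLp_id_gaussianReal' 1 (by simp)))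

lemma LipschitzWith.integrable_mul_gaussianReal (hg : LipschitzWith K g) :
    Integrable (fun y => y * g y) (gaussianReal μ v) :=
  (memLp_id_gaussianReal' 2 (by simp)).integrable_mul
    (hg.memLp_of_memLp_id (memLp_id_gaussianReal' 2 (by simp)))

end LipschitzGaussian

theorem integral_mul_gaussianReal_eq_integral_deriv {g : ℝ → ℝ} {K : ℝ≥0}
    (hg : Differentiable ℝ g) (hgK : LipschitzWith K g) :
    ∫ y, y * g y ∂gaussianReal 0 1 = ∫ y, deriv g y ∂gaussianReal 0 1 := by
  set p := gaussianPDFReal 0 1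
  have hp (y : ℝ) : HasDerivAt p (-y * p y) y := by
    simpa using hasDerivAt_gaussianPDFReal 0 1 y
  have hg_int : Integrable (p • g) :=
    (integrable_gaussianReal_iff one_ne_zero).1 hgK.integrable_gaussianReal
  have hyg_int : Integrable (fun y => p y * (y * g y)) :=
    (integrable_gaussianReal_iff one_ne_zero).1 hgK.integrable_mul_gaussianReal
  have hg'_int : Integrable (fun y => p y * deriv g y) :=
    (integrable_gaussianReal_iff one_ne_zero).1 <| .of_bound
      (measurable_deriv g).aestronglyMeasurable K
      (ae_of_all _ fun _ => norm_deriv_le_of_lipschitz hgK)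
  have ibp := integral_mul_deriv_eq_deriv_mul_of_integrable (fun y _ => (hg y).hasDerivAt)
    (fun y _ => hp y) (by convert hyg_int.neg using 1; ext y; simp; ring)
    (by convert hg'_int using 1; ext y; simp [mul_comm]) (by rwa [mul_comm])
  simp only [integral_gaussianReal_eq_integral_smul one_ne_zero, smul_eq_mul]
  calc ∫ y, p y * (y * g y) = -∫ y, g y * (-y * p y) := by
        rw [← integral_neg]; congr; ext y; ring
    _ = ∫ y, p y * deriv g y := by rw [ibp, neg_neg]; congr; ext y; ring

lemma integral_abs_gaussianReal : ∫ y, |y| ∂gaussianReal 0 1 = √(2 / π) := by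
  set p := gaussianPDFReal 0 1
  have hp (y : ℝ) : HasDerivAt (-p) (y * p y) y := by
    simpa using (hasDerivAt_gaussianPDFReal 0 1 y).neg
  have hp_abs (y : ℝ) : p |y| = p y := by simp [p, gaussianPDFReal]
  have hyp_int : Integrable (fun y => y * p y) := by
    simpa [mul_comm] using (integrable_gaussianReal_iff one_ne_zero).1
      (integrable_id_gaussianReal 0 1)
  have hp_tendsto : Tendsto (-p) atTop (𝓝 0) :=
    tendsto_zero_of_hasDerivAt_of_integrableOn_Ioi (a := 0) (fun y _ => hp y)
      hyp_int.integrableOn (integrable_gaussianPDFReal 0 1).neg.integrableOn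
  have hIoi : ∫ y in Ioi 0, y * p y = p 0 := by
    simpa using integral_Ioi_of_hasDerivAt_of_tendsto' (fun y _ => hp y) hyp_int.integrableOn
      hp_tendsto
  calc ∫ y, |y| ∂gaussianReal 0 1 = ∫ y, |y| * p |y| := by
        rw [integral_gaussianReal_eq_integral_smul one_ne_zero]
        simp only [hp_abs, smul_eq_mul, mul_comm]
        rfl
    _ = 2 * p 0 := by rw [integral_comp_abs (f := fun y => y * p y), hIoi]
    _ = √(2 / π) := by
        simp only [p, gaussianPDFReal, NNReal.coe_one, mul_one, sub_self, ne_eq,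
          OfNat.ofNat_ne_zero, not_false_eq_true, zero_pow, neg_zero, zero_div, exp_zero,
          sqrt_mul zero_le_two, sqrt_div zero_le_two]
        field_simp
        exact (sq_sqrt zero_le_two).symm

lemma hasDerivAt_integral_mul_comp_affine {μ : Measure ℝ} {w f : ℝ → ℝ} {K : ℝ≥0}
    (hf : Differentiable ℝ f) (hfK : LipschitzWith K f) (hw : Integrable w μ) (a b x₀ : ℝ)
    (hint : Integrable (fun y => w y * f (a * y + b * x₀)) μ) :
    HasDerivAt (fun x => ∫ y, w y * f (a * y + b * x) ∂μ)
      (b * ∫ y, w y * deriv f (a * y + b * x₀) ∂μ) x₀ := by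
  have hF (y x : ℝ) : HasDerivAt (fun x => w y * f (a * y + b * x))
      (w y * deriv f (a * y + b * x) * b) x := by
    simpa [mul_assoc] using
      ((hf _).hasDerivAt.comp x (((hasDerivAt_id' x).const_mul b).const_add (a * y))).const_mul
        (w y)
  have hlip (y : ℝ) : LipschitzWith (Real.nnabs (|w y| * (K * |b|)))
      (fun x => w y * f (a * y + b * x)) := by
    refine .of_dist_le_mul fun x x' => ?_
    rw [Real.coe_nnabs, abs_of_nonneg (by positivity), Real.dist_eq, Real.dist_eq, ← mul_sub,
      abs_mul, mul_assoc]
    gcongr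
    calc |f (a * y + b * x) - f (a * y + b * x')|
        ≤ K * |(a * y + b * x) - (a * y + b * x')| := by
          simpa [Real.dist_eq] using hfK.dist_le_mul (a * y + b * x) (a * y + b * x')
      _ = K * |b| * |x - x'| := by
          rw [show a * y + b * x - (a * y + b * x') = b * (x - x') by ring, abs_mul, mul_assoc]
  have hmeas (x : ℝ) : AEStronglyMeasurable (fun y => w y * f (a * y + b * x)) μ :=
    hw.aestronglyMeasurable.mul (hf.continuous.comp (by fun_prop)).aestronglyMeasurable
  have hderiv := (hasDerivAt_integral_of_dominated_loc_of_lip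
    (F' := fun y => w y * deriv f (a * y + b * x₀) * b) univ_mem
    (Eventually.of_forall hmeas) hint
    ((hw.aestronglyMeasurable.mul
      ((measurable_deriv f).comp (by fun_prop)).aestronglyMeasurable).mul_const b)
    (ae_of_all _ fun y => (hlip y).lipschitzOnWith) (hw.abs.mul_const _)
    (ae_of_all _ fun y => hF y x₀)).2
  simpa only [integral_mul_const, mul_comm b] using hderiv

section GaussianSmoothing

variable {f : ℝ → ℝ} {K : ℝ≥0}

lemma hasDerivAt_integral_comp_affine_gaussianReal (hf : Differentiable ℝ f)
    (hfK : LipschitzWith K f) {a : ℝ} (ha : a ≠ 0) (b x₀ : ℝ) :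
    HasDerivAt (fun x => ∫ y, f (a * y + b * x) ∂gaussianReal 0 1)
      (b / a * ∫ y, y * f (a * y + b * x₀) ∂gaussianReal 0 1) x₀ := by
  have hg := hfK.comp_mul_add a (b * x₀)
  have hg' (y : ℝ) :
      HasDerivAt (fun y => f (a * y + b * x₀)) (a * deriv f (a * y + b * x₀)) y :=
    ((hf _).hasDerivAt.comp y (((hasDerivAt_id' y).const_mul a).add_const (b * x₀))).congr_deriv
      (by ring)
  have hstein : ∫ y, y * f (a * y + b * x₀) ∂gaussianReal 0 1
      = a * ∫ y, deriv f (a * y + b * x₀) ∂gaussianReal 0 1 := by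
    rw [integral_mul_gaussianReal_eq_integral_deriv (fun y => (hg' y).differentiableAt) hg,
      ← integral_const_mul]
    simp only [fun y => (hg' y).deriv]
  have h := hasDerivAt_integral_mul_comp_affine (μ := gaussianReal 0 1) (w := fun _ => 1)
    hf hfK (integrable_const 1) a b x₀ (by simpa using hg.integrable_gaussianReal)
  simp only [one_mul] at h
  rw [hstein]
  convert h using 1
  field_simp

lemma hasDerivAt_integral_mul_comp_affine_gaussianReal (hf : Differentiable ℝ f)
    (hfK : LipschitzWith K f) (a b x₀ : ℝ) :
    HasDerivAt (fun x => ∫ y, y * f (a * y + b * x) ∂gaussianReal 0 1)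
      (b * ∫ y, y * deriv f (a * y + b * x₀) ∂gaussianReal 0 1) x₀ :=
  hasDerivAt_integral_mul_comp_affine hf hfK (integrable_id_gaussianReal 0 1) a b x₀
    (hfK.comp_mul_add a (b * x₀)).integrable_mul_gaussianReal

end GaussianSmoothing

lemma abs_integral_mul_gaussianReal_le {g : ℝ → ℝ} {S : ℝ} (hg : ∀ z, |g z| ≤ S) :
    |∫ y, y * g y ∂gaussianReal 0 1| ≤ √(2 / π) * S :=
  calc |∫ y, y * g y ∂gaussianReal 0 1| ≤ ∫ y, |y| * S ∂gaussianReal 0 1 :=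
        norm_integral_le_of_norm_le ((integrable_id_gaussianReal 0 1).abs.mul_const S)
          (ae_of_all _ fun y => by
            rw [Real.norm_eq_abs, abs_mul]
            exact mul_le_mul_of_nonneg_left (hg y) (abs_nonneg y))
    _ = √(2 / π) * S := by rw [integral_mul_const, integral_abs_gaussianReal]

theorem second_deriv_gaussian_smoothing
    (φ : ℝ → ℝ) (hφ : ContDiff ℝ 1 φ) (hφ' : ∃ C : ℝ, ∀ x, |deriv φ x| ≤ C)
    (t : ℝ) (ht : t ∈ Set.Ioo (0 : ℝ) 1)
    (φt : ℝ → ℝ)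
    (hφt : φt = fun x => ∫ y, φ (Real.sqrt t * y + Real.sqrt (1 - t) * x)
      ∂(gaussianReal 0 1)) :
    (∀ x, DifferentiableAt ℝ φt x) ∧ (∀ x, DifferentiableAt ℝ (deriv φt) x) ∧
    (∀ x, deriv (deriv φt) x
        = ((1 - t) / Real.sqrt t) *
            ∫ y, y * deriv φ (Real.sqrt t * y + Real.sqrt (1 - t) * x)
              ∂(gaussianReal 0 1)) ∧
    (∀ x, |deriv (deriv φt) x|
        ≤ Real.sqrt (2 / Real.pi) * ((1 - t) / Real.sqrt t) * ⨆ y, |deriv φ y|) := by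
  obtain ⟨ht0, ht1⟩ := ht
  set a := √t
  set b := √(1 - t)
  have ha : a ≠ 0 := (Real.sqrt_pos.2 ht0).ne'
  have hbb : b * b = 1 - t := Real.mul_self_sqrt (by linarith)
  have hφd := hφ.differentiable one_ne_zero
  set S := ⨆ y, |deriv φ y|
  have hS (z : ℝ) : |deriv φ z| ≤ S := by
    obtain ⟨C, hC⟩ := hφ'
    exact le_ciSup ⟨C, by rintro _ ⟨y, rfl⟩; exact hC y⟩ z
  have hφK : LipschitzWith S.toNNReal φ := lipschitzWith_of_nnnorm_deriv_le hφd fun z => by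
    rw [← NNReal.coe_le_coe, coe_nnnorm]
    exact (hS z).trans (Real.le_coe_toNNReal S)
  have h1 (x : ℝ) :
      HasDerivAt φt (b / a * ∫ y, y * φ (a * y + b * x) ∂gaussianReal 0 1) x :=
    hφt ▸ hasDerivAt_integral_comp_affine_gaussianReal hφd hφK ha b x
  have h2 (x : ℝ) : HasDerivAt (deriv φt)
      ((1 - t) / a * ∫ y, y * deriv φ (a * y + b * x) ∂gaussianReal 0 1) x := by
    rw [show deriv φt = _ from funext fun x => (h1 x).deriv]
    exact (hasDerivAt_integral_mul_comp_affine_gaussianReal hφd hφK a b x).const_mul (b / a)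
      |>.congr_deriv (by rw [← hbb]; ring)
  refine ⟨fun x => (h1 x).differentiableAt, fun x => (h2 x).differentiableAt,
    fun x => (h2 x).deriv, fun x => ?_⟩
  rw [(h2 x).deriv, abs_mul, abs_of_nonneg (div_nonneg (by linarith) (Real.sqrt_nonneg t))]
  calc (1 - t) / a * |∫ y, y * deriv φ (a * y + b * x) ∂gaussianReal 0 1|
      ≤ (1 - t) / a * (√(2 / π) * S) := by
        gcongr
        exact abs_integral_mul_gaussianReal_le fun _ => hS _
    _ = √(2 / π) * ((1 - t) / a) * S := by ring
end

section
/- Let γ denote the standard Gaussian measure N(0,1) on ℝ, let φ : ℝ → ℝ be of class C¹ with bounded derivative, and for t ∈ (0,1) define φ_t(x) = ∫_ℝ φ(√t·y + √(1−t)·x) dγ(y). Then φ_t is three times differentiable, for every x one has φ_t'''(x) = ((1−t)^{3/2}/t) ∫_ℝ (y²−1)·φ'(√t·y + √(1−t)·x) dγ(y), and consequently sup_x |φ_t'''(x)| ≤ √2 · ((1−t)^{3/2}/t) · sup_x|φ'(x)|. -/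
/-!
Write `φ_t x = Φ (√(1 - t) * x)` with `Φ m = ∫ φ (√t * y + m) dγ(y)`. Since `φ'` is bounded, one
derivative of `Φ` can be taken under the integral sign. From then on the integrand `φ'` is only
continuous, so the remaining derivatives are put on the Gaussian density instead: the translation
`y ↦ y - m / √t` turns `∫ k y * g (√t * y + m) dy` into `∫ k (y - m / √t) * g (√t * y) dy`, and
differentiating the kernels `e^{-y²/2}` and `y e^{-y²/2}` produces the Hermite polynomials `y` and
`y² - 1`, each time with a factor `1 / √t`. The bound is Cauchy–Schwarz together with
`∫ (y² - 1)² dγ = 2`.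
-/

open MeasureTheory ProbabilityTheory Real Filter

theorem integrable_pow_mul_exp_neg_mul_sq (n : ℕ) {b : ℝ} (hb : 0 < b) :
    Integrable fun x : ℝ => x ^ n * exp (-b * x ^ 2) := by
  simpa [rpow_natCast] using
    integrable_rpow_mul_exp_neg_mul_sq hb (s := n) (by linarith [n.cast_nonneg (α := ℝ)])

theorem integrable_add_mul_sq_mul_exp_neg_mul_sq (a b : ℝ) {β : ℝ} (hβ : 0 < β) :
    Integrable fun x : ℝ => (a + b * x ^ 2) * exp (-β * x ^ 2) := by
  have hi k := integrable_pow_mul_exp_neg_mul_sq k hβ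
  refine (((hi 0).const_mul a).add ((hi 2).const_mul b)).congr (.of_forall fun x => ?_)
  simp only [Pi.add_apply]
  ring

theorem integrable_pow_mul_exp_neg_sq_div_two (n : ℕ) :
    Integrable fun y : ℝ => y ^ n * exp (-y ^ 2 / 2) := by
  simpa [neg_div, div_eq_inv_mul, mul_comm] using
    integrable_pow_mul_exp_neg_mul_sq n (b := 1 / 2) (by norm_num)

theorem hasDerivAt_exp_neg_sq_div_two (y : ℝ) :
    HasDerivAt (fun y => exp (-y ^ 2 / 2)) (-y * exp (-y ^ 2 / 2)) y := by
  have h : HasDerivAt (fun y : ℝ => -y ^ 2 / 2) (-y) y :=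
    ((hasDerivAt_pow 2 y).fun_neg.div_const 2).congr_deriv (by ring)
  convert h.exp using 1
  ring

theorem exists_integrable_one_add_sq_mul_exp_neg_sq_sub_le :
    ∃ B : ℝ → ℝ, Integrable B ∧
      ∀ z w, |w| ≤ 1 → (1 + (z - w) ^ 2) * exp (-(z - w) ^ 2 / 2) ≤ B z := by
  refine ⟨fun z => exp (1 / 2) * ((3 + 2 * z ^ 2) * exp (-(1 / 4) * z ^ 2)),
    (integrable_add_mul_sq_mul_exp_neg_mul_sq 3 2 (by norm_num)).const_mul _, fun z w hw => ?_⟩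
  have hw2 : w ^ 2 ≤ 1 := by nlinarith [sq_abs w, abs_nonneg w]
  have hexp : exp (-(z - w) ^ 2 / 2) ≤ exp (1 / 2) * exp (-(1 / 4) * z ^ 2) := by
    rw [← exp_add, exp_le_exp]
    nlinarith [sq_nonneg (z - 2 * w)]
  calc (1 + (z - w) ^ 2) * exp (-(z - w) ^ 2 / 2)
      ≤ (3 + 2 * z ^ 2) * (exp (1 / 2) * exp (-(1 / 4) * z ^ 2)) := by
        refine mul_le_mul ?_ hexp (exp_pos _).le (by positivity)
        nlinarith [sq_nonneg (z + w)]
    _ = _ := by ring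

theorem integral_gaussianReal_zero_one (f : ℝ → ℝ) :
    ∫ y, f y ∂gaussianReal 0 1 = (√(2 * π))⁻¹ * ∫ y, exp (-y ^ 2 / 2) * f y := by
  rw [integral_gaussianReal_eq_integral_smul one_ne_zero, ← integral_const_mul]
  simp [gaussianPDFReal, mul_assoc]

theorem integrable_pow_gaussianReal (n : ℕ) :
    Integrable (fun y : ℝ => y ^ n) (gaussianReal 0 1) :=
  integrable_pow_of_mem_interior_integrableExpSet (X := id) (by simp) n

theorem integral_pow_add_two_gaussianReal (n : ℕ) :
    ∫ y, y ^ (n + 2) ∂gaussianReal 0 1 = (n + 1) * ∫ y, y ^ n ∂gaussianReal 0 1 := by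
  have hi := integrable_pow_mul_exp_neg_sq_div_two
  have ibp := integral_mul_deriv_eq_deriv_mul_of_integrable (u := fun y => y ^ (n + 1))
    (u' := fun y => (n + 1 : ℝ) * y ^ n) (v' := fun y => -y * exp (-y ^ 2 / 2))
    (fun y _ => by simpa using hasDerivAt_pow (n + 1) y)
    (fun y _ => hasDerivAt_exp_neg_sq_div_two y)
    ((hi (n + 2)).neg.congr (.of_forall fun y => by simp; ring))
    (((hi n).const_mul (n + 1)).congr (.of_forall fun y => by simp; ring)) (hi (n + 1))
  have lhs : ∫ y, y ^ (n + 1) * (-y * exp (-y ^ 2 / 2))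
      = -∫ y, exp (-y ^ 2 / 2) * y ^ (n + 2) := by
    rw [← integral_neg]; congr 1; ext y; ring
  have rhs : ∫ y, (n + 1 : ℝ) * y ^ n * exp (-y ^ 2 / 2)
      = (n + 1) * ∫ y, exp (-y ^ 2 / 2) * y ^ n := by
    rw [← integral_const_mul]; congr 1; ext y; ring
  rw [lhs, rhs, neg_inj] at ibp
  rw [integral_gaussianReal_zero_one, integral_gaussianReal_zero_one, ibp]
  ring

theorem integral_sq_sub_one_sq_gaussianReal : ∫ y, (y ^ 2 - 1) ^ 2 ∂gaussianReal 0 1 = 2 := by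
  have m2 : ∫ y, y ^ 2 ∂gaussianReal 0 1 = 1 := by
    simpa using integral_pow_add_two_gaussianReal 0
  have m4 : ∫ y, y ^ 4 ∂gaussianReal 0 1 = 3 := by
    rw [integral_pow_add_two_gaussianReal 2, m2]; norm_num
  have hi := integrable_pow_gaussianReal
  calc ∫ y, (y ^ 2 - 1) ^ 2 ∂gaussianReal 0 1
      = ∫ y, (y ^ 4 - 2 * y ^ 2 + 1) ∂gaussianReal 0 1 := by congr 1; ext y; ring
    _ = 2 := by
      rw [integral_add, integral_sub, integral_const_mul, m2, m4]
      · norm_num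
      exacts [hi 4, (hi 2).const_mul 2, (hi 4).sub ((hi 2).const_mul 2), integrable_const 1]

theorem integral_abs_sq_sub_one_gaussianReal_le :
    ∫ y, |y ^ 2 - 1| ∂gaussianReal 0 1 ≤ √2 := by
  have hL2 : MemLp (fun y : ℝ => |y ^ 2 - 1|) 2 (gaussianReal 0 1) := by
    refine (memLp_two_iff_integrable_sq (by fun_prop)).2 ?_
    simp only [sq_abs]
    refine (((integrable_pow_gaussianReal 4).sub
      ((integrable_pow_gaussianReal 2).const_mul 2)).add (integrable_const 1)).congr
      (.of_forall fun y => ?_)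
    simp; ring
  -- Cauchy–Schwarz, in the form `Var |y² - 1| ≥ 0`
  have hvar := variance_nonneg (fun y : ℝ => |y ^ 2 - 1|) (gaussianReal 0 1)
  rw [variance_eq_sub hL2] at hvar
  simp only [Pi.pow_apply, sq_abs, integral_sq_sub_one_sq_gaussianReal] at hvar
  exact Real.le_sqrt_of_sq_le (by linarith)

theorem abs_integral_sq_sub_one_mul_le {f : ℝ → ℝ} {M : ℝ} (hfM : ∀ y, |f y| ≤ M) :
    |∫ y, (y ^ 2 - 1) * f y ∂gaussianReal 0 1| ≤ √2 * M := by
  have hM : 0 ≤ M := (abs_nonneg _).trans (hfM 0)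
  calc |∫ y, (y ^ 2 - 1) * f y ∂gaussianReal 0 1|
      ≤ ∫ y, |y ^ 2 - 1| * M ∂gaussianReal 0 1 := by
        rw [← Real.norm_eq_abs]
        refine norm_integral_le_of_norm_le
          (((integrable_pow_gaussianReal 2).sub (integrable_const (1 : ℝ))).abs.mul_const M)
          (.of_forall fun y => ?_)
        rw [Real.norm_eq_abs, abs_mul]
        exact mul_le_mul_of_nonneg_left (hfM y) (abs_nonneg _)
    _ = (∫ y, |y ^ 2 - 1| ∂gaussianReal 0 1) * M := by rw [integral_mul_const]
    _ ≤ √2 * M := mul_le_mul_of_nonneg_right integral_abs_sq_sub_one_gaussianReal_le hM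

theorem LipschitzWith.integrable_comp {α E F : Type*} [MeasurableSpace α] {μ : Measure α}
    [IsFiniteMeasure μ] [NormedAddCommGroup E] [NormedAddCommGroup F] {K : NNReal} {φ : E → F}
    (hφ : LipschitzWith K φ) {f : α → E} (hf : Integrable f μ) :
    Integrable (fun a => φ (f a)) μ := by
  refine ((hf.norm.const_mul K).add (integrable_const ‖φ 0‖)).mono'
    (hφ.continuous.comp_aestronglyMeasurable hf.1) (.of_forall fun a => ?_)
  have := hφ.norm_sub_le (f a) 0
  rw [sub_zero] at this
  simpa using (norm_le_norm_add_norm_sub' (φ (f a)) (φ 0)).trans (by linarith)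

theorem hasDerivAt_integral_comp_mul_add {μ : Measure ℝ} [IsFiniteMeasure μ]
    (hμ : Integrable id μ) {φ : ℝ → ℝ} {C : ℝ} (hφ : Differentiable ℝ φ)
    (hφC : ∀ x, |deriv φ x| ≤ C) (c m₀ : ℝ) :
    HasDerivAt (fun m => ∫ y, φ (c * y + m) ∂μ)
      (∫ y, deriv φ (c * y + m₀) ∂μ) m₀ := by
  have hC : 0 ≤ C := (abs_nonneg _).trans (hφC 0)
  have hlip : LipschitzWith C.toNNReal φ := lipschitzWith_of_nnnorm_deriv_le hφ fun x => by
    rw [← NNReal.coe_le_coe, coe_nnnorm, Real.coe_toNNReal _ hC]; exact hφC x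
  refine (hasDerivAt_integral_of_dominated_loc_of_deriv_le (F := fun m y => φ (c * y + m))
    (F' := fun m y => deriv φ (c * y + m)) (x₀ := m₀) (bound := fun _ => C) univ_mem
    (.of_forall fun m => (hφ.continuous.comp (by fun_prop)).aestronglyMeasurable)
    (hlip.integrable_comp ((hμ.const_mul c).add (integrable_const m₀)))
    ((measurable_deriv φ).comp (by fun_prop)).aestronglyMeasurable
    (.of_forall fun y m _ => hφC _) (integrable_const C) (.of_forall fun y m _ => ?_)).2
  exact ((hφ _).hasDerivAt.comp m ((hasDerivAt_id m).const_add (c * y))).congr_deriv (mul_one _)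

theorem hasDerivAt_integral_mul_comp_mul_add {k k' B g : ℝ → ℝ} {c C : ℝ} (hc : c ≠ 0)
    (hk : ∀ y, HasDerivAt k (k' y) y) (hk_int : Integrable k) (hB : Integrable B)
    (hk'B : ∀ z w, |w| ≤ 1 → |k' (z - w)| ≤ B z)
    (hg : Measurable g) (hgC : ∀ u, |g u| ≤ C) (m₀ : ℝ) :
    HasDerivAt (fun m => ∫ y, k y * g (c * y + m))
      (-c⁻¹ * ∫ y, k' y * g (c * y + m₀)) m₀ := by
  -- `g` need not be differentiable: the translation moves the parameter `m` into the kernel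
  have shift (f : ℝ → ℝ) (m : ℝ) :
      ∫ y, f y * g (c * y + m) = ∫ y, f (y - m / c) * g (c * y) := by
    rw [← integral_sub_right_eq_self (fun y => f y * g (c * y + m)) (m / c)]
    congr 1; ext y; congr 2; field_simp; ring
  have hgc : AEStronglyMeasurable (fun y => g (c * y)) :=
    (hg.comp (measurable_const_mul c)).aestronglyMeasurable
  have hgc_le : ∀ᵐ y ∂volume, ‖g (c * y)‖ ≤ C := .of_forall fun y => hgC _
  simp only [shift k, shift k' m₀, ← integral_const_mul]
  refine (hasDerivAt_integral_of_dominated_loc_of_deriv_le (x₀ := m₀)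
    (F' := fun m y => -c⁻¹ * (k' (y - m / c) * g (c * y)))
    (bound := fun y => |c⁻¹| * (B (y - m₀ / c) * C))
    (Metric.ball_mem_nhds m₀ (abs_pos.2 hc)) (.of_forall fun m => ?_)
    ((hk_int.comp_sub_right _).mul_bdd hgc hgc_le) ?_ (.of_forall fun y m hm => ?_)
    ((hB.comp_sub_right _).mul_const C |>.const_mul _) (.of_forall fun y m _ => ?_)).2
  · have hkc : Continuous k := continuous_iff_continuousAt.2 fun y => (hk y).continuousAt
    exact (hkc.comp (continuous_sub_right _)).aestronglyMeasurable.mul hgc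
  · have hkm : Measurable k' := funext (fun y => (hk y).deriv) ▸ measurable_deriv k
    exact ((hkm.comp (measurable_sub_const _)).aestronglyMeasurable.mul hgc).const_mul _
  · have hw : |m / c - m₀ / c| ≤ 1 := by
      rw [← sub_div, abs_div]
      exact (div_le_one (abs_pos.2 hc)).2 (Metric.mem_ball.1 hm).le
    have hk'_le := hk'B (y - m₀ / c) (m / c - m₀ / c) hw
    rw [sub_sub_sub_cancel_right] at hk'_le
    rw [norm_mul, norm_mul, Real.norm_eq_abs, Real.norm_eq_abs, Real.norm_eq_abs, abs_neg]
    exact mul_le_mul_of_nonneg_left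
      (mul_le_mul hk'_le (hgC _) (abs_nonneg _) ((abs_nonneg _).trans hk'_le)) (abs_nonneg _)
  · have hin : HasDerivAt (fun m => y - m / c) (-c⁻¹) m := by
      simpa [div_eq_mul_inv] using ((hasDerivAt_id m).div_const c).const_sub y
    exact (((hk _).comp m hin).mul_const _).congr_deriv (by ring)

theorem hasDerivAt_integral_gaussianReal_comp_mul_add {g : ℝ → ℝ} {c C : ℝ} (hc : c ≠ 0)
    (hg : Measurable g) (hgC : ∀ u, |g u| ≤ C) (m₀ : ℝ) :
    HasDerivAt (fun m => ∫ y, g (c * y + m) ∂gaussianReal 0 1)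
      (c⁻¹ * ∫ y, y * g (c * y + m₀) ∂gaussianReal 0 1) m₀ := by
  obtain ⟨B, hB, hBle⟩ := exists_integrable_one_add_sq_mul_exp_neg_sq_sub_le
  have hk := hasDerivAt_integral_mul_comp_mul_add hc hasDerivAt_exp_neg_sq_div_two
    (by simpa using integrable_pow_mul_exp_neg_sq_div_two 0)
    hB (fun z w hw => (hBle z w hw).trans' ?_) hg hgC m₀
  · simp only [integral_gaussianReal_zero_one]
    refine (hk.const_mul (√(2 * π))⁻¹).congr_deriv ?_
    have e : ∫ y, -y * exp (-y ^ 2 / 2) * g (c * y + m₀)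
        = -∫ y, exp (-y ^ 2 / 2) * (y * g (c * y + m₀)) := by
      rw [← integral_neg]; congr 1; ext y; ring
    rw [e]; ring
  · rw [abs_mul, abs_neg, abs_of_pos (exp_pos _)]
    exact mul_le_mul_of_nonneg_right (by nlinarith [sq_abs (z - w), abs_nonneg (z - w)])
      (exp_pos _).le

theorem hasDerivAt_integral_gaussianReal_mul_comp_mul_add {g : ℝ → ℝ} {c C : ℝ} (hc : c ≠ 0)
    (hg : Measurable g) (hgC : ∀ u, |g u| ≤ C) (m₀ : ℝ) :
    HasDerivAt (fun m => ∫ y, y * g (c * y + m) ∂gaussianReal 0 1)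
      (c⁻¹ * ∫ y, (y ^ 2 - 1) * g (c * y + m₀) ∂gaussianReal 0 1) m₀ := by
  obtain ⟨B, hB, hBle⟩ := exists_integrable_one_add_sq_mul_exp_neg_sq_sub_le
  have hk := hasDerivAt_integral_mul_comp_mul_add hc (k := fun y => y * exp (-y ^ 2 / 2))
    (k' := fun y => (1 - y ^ 2) * exp (-y ^ 2 / 2))
    (fun y => ((hasDerivAt_id y).mul (hasDerivAt_exp_neg_sq_div_two y)).congr_deriv
      (by simp; ring))
    (by simpa using integrable_pow_mul_exp_neg_sq_div_two 1)
    hB (fun z w hw => (hBle z w hw).trans' ?_) hg hgC m₀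
  · have e (f : ℝ → ℝ) : ∫ y, y * f y ∂gaussianReal 0 1
        = (√(2 * π))⁻¹ * ∫ y, y * exp (-y ^ 2 / 2) * f y := by
      rw [integral_gaussianReal_zero_one]; congr 2; ext y; ring
    simp only [e]
    refine (hk.const_mul (√(2 * π))⁻¹).congr_deriv ?_
    have e' : ∫ y, (1 - y ^ 2) * exp (-y ^ 2 / 2) * g (c * y + m₀)
        = -∫ y, exp (-y ^ 2 / 2) * ((y ^ 2 - 1) * g (c * y + m₀)) := by
      rw [← integral_neg]; congr 1; ext y; ring
    rw [integral_gaussianReal_zero_one, e']; ring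
  · rw [abs_mul, abs_of_pos (exp_pos _)]
    exact mul_le_mul_of_nonneg_right
      (abs_le.2 ⟨by linarith [sq_nonneg (z - w)], by linarith [sq_nonneg (z - w)]⟩)
      (exp_pos _).le

theorem hasDerivAt_deriv_deriv_comp_mul_left {Φ H₀ H₁ H₂ : ℝ → ℝ} {a : ℝ}
    (hΦ : ∀ m, HasDerivAt Φ (H₀ m) m) (hH₀ : ∀ m, HasDerivAt H₀ (a * H₁ m) m)
    (hH₁ : ∀ m, HasDerivAt H₁ (a * H₂ m) m) (s x : ℝ) :
    HasDerivAt (fun x => Φ (s * x)) (s * H₀ (s * x)) x ∧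
    HasDerivAt (deriv fun x => Φ (s * x)) (s ^ 2 * a * H₁ (s * x)) x ∧
    HasDerivAt (deriv (deriv fun x => Φ (s * x))) (s ^ 3 * a ^ 2 * H₂ (s * x)) x := by
  have chain {F F' : ℝ → ℝ} (hF : ∀ m, HasDerivAt F (F' m) m) (b x : ℝ) :
      HasDerivAt (fun x => b * F (s * x)) (b * s * F' (s * x)) x :=
    (((hF (s * x)).comp x ((hasDerivAt_id x).const_mul s)).const_mul b).congr_deriv (by ring)
  have h₀ x : HasDerivAt (fun x => Φ (s * x)) (s * H₀ (s * x)) x := by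
    simpa using chain hΦ 1 x
  have d₀ : deriv (fun x => Φ (s * x)) = fun x => s * H₀ (s * x) :=
    funext fun x => (h₀ x).deriv
  have h₁ x : HasDerivAt (fun x => s * H₀ (s * x)) (s * s * (a * H₁ (s * x))) x :=
    chain hH₀ s x
  have d₁ : deriv (deriv fun x => Φ (s * x)) = fun x => s * s * (a * H₁ (s * x)) := by
    rw [d₀]; exact funext fun x => (h₁ x).deriv
  refine ⟨h₀ x, d₀ ▸ (h₁ x).congr_deriv (by ring), d₁ ▸ ?_⟩
  exact (chain (fun m => (hH₁ m).const_mul a) (s * s) x).congr_deriv (by ring)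

theorem third_deriv_gaussian_smoothing
    (φ : ℝ → ℝ) (hφ : ContDiff ℝ 1 φ) (hφ' : ∃ C : ℝ, ∀ x, |deriv φ x| ≤ C)
    (t : ℝ) (ht : t ∈ Set.Ioo (0 : ℝ) 1)
    (φt : ℝ → ℝ)
    (hφt : φt = fun x => ∫ y, φ (Real.sqrt t * y + Real.sqrt (1 - t) * x)
      ∂(gaussianReal 0 1)) :
    (∀ x, DifferentiableAt ℝ φt x) ∧ (∀ x, DifferentiableAt ℝ (deriv φt) x) ∧
    (∀ x, DifferentiableAt ℝ (deriv (deriv φt)) x) ∧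
    (∀ x, deriv (deriv (deriv φt)) x
        = ((1 - t) ^ ((3 : ℝ) / 2) / t) *
            ∫ y, (y ^ 2 - 1) * deriv φ (Real.sqrt t * y + Real.sqrt (1 - t) * x)
              ∂(gaussianReal 0 1)) ∧
    (∀ x, |deriv (deriv (deriv φt)) x|
        ≤ Real.sqrt 2 * ((1 - t) ^ ((3 : ℝ) / 2) / t) * ⨆ y, |deriv φ y|) := by
  obtain ⟨ht0, ht1⟩ := ht
  obtain ⟨C, hC⟩ := hφ'
  have hc : √t ≠ 0 := (sqrt_pos.2 ht0).ne'
  have h x := hasDerivAt_deriv_deriv_comp_mul_left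
    (hasDerivAt_integral_comp_mul_add ((memLp_id_gaussianReal 1).integrable le_rfl)
      (hφ.differentiable one_ne_zero) hC (√t))
    (hasDerivAt_integral_gaussianReal_comp_mul_add hc (measurable_deriv φ) hC)
    (hasDerivAt_integral_gaussianReal_mul_comp_mul_add hc (measurable_deriv φ) hC) (√(1 - t)) x
  subst hφt
  have hcoeff : √(1 - t) ^ 3 * (√t)⁻¹ ^ 2 = (1 - t) ^ ((3 : ℝ) / 2) / t := by
    rw [inv_pow, sq_sqrt ht0.le, show (3 : ℝ) / 2 = 1 / 2 * 3 by norm_num,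
      rpow_mul (by linarith), ← sqrt_eq_rpow]
    norm_cast
  have hM y : |deriv φ y| ≤ ⨆ y, |deriv φ y| :=
    le_ciSup ⟨C, by rintro _ ⟨y, rfl⟩; exact hC y⟩ y
  refine ⟨fun x => (h x).1.differentiableAt, fun x => (h x).2.1.differentiableAt,
    fun x => (h x).2.2.differentiableAt, fun x => ?_, fun x => ?_⟩
  · rw [(h x).2.2.deriv, hcoeff]
  · rw [(h x).2.2.deriv, hcoeff, abs_mul, abs_of_nonneg (by positivity), mul_comm (√2),
      mul_assoc]
    exact mul_le_mul_of_nonneg_left (abs_integral_sq_sub_one_mul_le fun y => hM _) (by positivity)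
end

section
/- Let H ∈ (1/2, 1) and for nonnegative integers n, m define ρ_{n,m} = ∫₀¹ ∫₀ᵗ s^n t^m (t−s)^{2H−2} ds dt. Then there exists a constant C_H > 0, depending only on H, such that for every integer n ≥ 1: ρ_{n,n} ≤ C_H · n^{−2H} and 0 ≤ ρ_{n,n} − ρ_{n+1,n} ≤ C_H · n^{−2H−1}. -/
/-!
Substituting `s = t u` in the inner integral factors `ρ_{n,m}` as
`B(n + 1, 2H - 1) / (n + m + 2H)`. Reflecting `u ↦ 1 - u` and using `(1 - v)^n ≤ e^{-n v}`
bounds `B(n + 1, a)` by `∫₀^∞ v^{a-1} e^{-n v} dv = Γ(a) n^{-a}`. For the difference, the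
identity `(1 - u)^{2H-2} = u (1 - u)^{2H-2} + (1 - u)^{2H-1}` writes
`ρ_{n,m} - ρ_{n+1,m}` as a sum of two nonnegative terms, each of order `n^{-2H-1}`.
-/

open MeasureTheory

/-- `ρ_{n,m} = ∫₀¹ ∫₀ᵗ s^n t^m (t−s)^{2H−2} ds dt`. -/
noncomputable def rhoNM (H : ℝ) (n m : ℕ) : ℝ :=
  ∫ t in Set.Ioo (0 : ℝ) 1, ∫ s in Set.Ioo (0 : ℝ) t,
    s ^ n * t ^ m * (t - s) ^ (2 * H - 2)

open Set Real

/-- `betaPow n r = B(n + 1, r + 1)`, Euler's Beta function at these arguments. -/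
noncomputable def betaPow (n : ℕ) (r : ℝ) : ℝ :=
  ∫ u in (0 : ℝ)..1, u ^ n * (1 - u) ^ r

lemma intervalIntegrable_pow_mul_one_sub_rpow (n : ℕ) {r : ℝ} (hr : -1 < r) :
    IntervalIntegrable (fun u : ℝ => u ^ n * (1 - u) ^ r) volume 0 1 := by
  have h : IntervalIntegrable (fun u : ℝ => (1 - u) ^ r) volume 0 1 := by
    simpa using
      ((intervalIntegral.intervalIntegrable_rpow' (a := 0) (b := 1) hr).comp_sub_left 1).symm
  exact h.continuousOn_mul (by fun_prop)

lemma betaPow_nonneg (n : ℕ) (r : ℝ) : 0 ≤ betaPow n r :=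
  intervalIntegral.integral_nonneg zero_le_one fun _ hu =>
    mul_nonneg (pow_nonneg hu.1 n) (rpow_nonneg (sub_nonneg.2 hu.2) r)

lemma betaPow_eq_betaPow_succ_add {r : ℝ} (hr : -1 < r) (n : ℕ) :
    betaPow n r = betaPow (n + 1) r + betaPow n (r + 1) := by
  rw [betaPow, betaPow, betaPow, ← intervalIntegral.integral_add
    (intervalIntegrable_pow_mul_one_sub_rpow (n + 1) hr)
    (intervalIntegrable_pow_mul_one_sub_rpow n (by linarith))]
  refine intervalIntegral.integral_congr fun u hu => ?_
  rw [uIcc_of_le zero_le_one] at hu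
  simp only [rpow_add' (sub_nonneg.2 hu.2) (by linarith : r + 1 ≠ 0), rpow_one, pow_succ]
  ring

lemma integral_rpow_mul_exp_neg_mul_le {a x : ℝ} (ha : 0 < a) (hx : 0 < x) :
    ∫ v in (0 : ℝ)..1, v ^ (a - 1) * exp (-(x * v)) ≤ Gamma a * x ^ (-a) := by
  have hIoi := integral_rpow_mul_exp_neg_mul_Ioi ha hx
  rw [one_div, inv_rpow hx.le, ← rpow_neg hx.le, mul_comm] at hIoi
  rw [intervalIntegral.integral_of_le zero_le_one, ← hIoi]
  refine setIntegral_mono_set (.of_integral_ne_zero ?_) ?_ (.of_forall Ioc_subset_Ioi_self)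
  · rw [hIoi]; exact (mul_pos (Gamma_pos_of_pos ha) (rpow_pos_of_pos hx _)).ne'
  · filter_upwards [ae_restrict_mem measurableSet_Ioi] with v hv
    exact mul_nonneg (rpow_nonneg hv.out.le _) (exp_pos _).le

lemma betaPow_le_Gamma_mul_rpow {a : ℝ} (ha : 0 < a) {n : ℕ} (hn : 0 < n) :
    betaPow n (a - 1) ≤ Gamma a * (n : ℝ) ^ (-a) := by
  have hreflect : betaPow n (a - 1) = ∫ v in (0 : ℝ)..1, v ^ (a - 1) * (1 - v) ^ n := by
    simpa [betaPow, mul_comm] using intervalIntegral.integral_comp_sub_left (a := 0) (b := 1)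
      (fun v : ℝ => v ^ (a - 1) * (1 - v) ^ n) 1
  have hrpow : IntervalIntegrable (fun v : ℝ => v ^ (a - 1)) volume 0 1 :=
    intervalIntegral.intervalIntegrable_rpow' (by linarith)
  rw [hreflect]
  refine le_trans (intervalIntegral.integral_mono_on zero_le_one
    (hrpow.mul_continuousOn (by fun_prop)) (hrpow.mul_continuousOn (by fun_prop)) fun v hv => ?_)
    (integral_rpow_mul_exp_neg_mul_le ha (Nat.cast_pos.2 hn))
  have hexp : (1 - v) ^ n ≤ exp (-(n * v)) :=
    calc (1 - v) ^ n ≤ exp (-v) ^ n :=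
          pow_le_pow_left₀ (sub_nonneg.2 hv.2) (one_sub_le_exp_neg v) n
      _ = exp (-(n * v)) := by rw [← exp_nat_mul]; ring_nf
  exact mul_le_mul_of_nonneg_left hexp (rpow_nonneg hv.1 _)

lemma setIntegral_Ioo_pow_mul_pow_mul_sub_rpow (n m : ℕ) (r : ℝ) {t : ℝ} (ht : 0 < t) :
    ∫ s in Ioo 0 t, s ^ n * t ^ m * (t - s) ^ r
      = t ^ ((n : ℝ) + m + r + 1) * betaPow n r := by
  have hscale := intervalIntegral.smul_integral_comp_mul_left (a := 0) (b := 1)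
    (fun s : ℝ => s ^ n * t ^ m * (t - s) ^ r) t
  rw [mul_zero, mul_one] at hscale
  rw [← integral_Ioc_eq_integral_Ioo, ← intervalIntegral.integral_of_le ht.le, ← hscale,
    betaPow, smul_eq_mul, ← intervalIntegral.integral_const_mul,
    ← intervalIntegral.integral_const_mul]
  refine intervalIntegral.integral_congr fun u hu => ?_
  rw [uIcc_of_le zero_le_one] at hu
  simp only [show t - t * u = t * (1 - u) by ring, mul_rpow ht.le (sub_nonneg.2 hu.2),
    rpow_add ht, rpow_natCast, rpow_one]
  ring

lemma rhoNM_eq {H : ℝ} (hH : 0 < H) (n m : ℕ) :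
    rhoNM H n m = betaPow n (2 * H - 2) / (n + m + 2 * H) := by
  have hpos : (0 : ℝ) < n + m + 2 * H := by positivity
  have hexp : (-1 : ℝ) < n + m + (2 * H - 2) + 1 := by linarith
  rw [rhoNM, setIntegral_congr_fun measurableSet_Ioo
    fun t ht => setIntegral_Ioo_pow_mul_pow_mul_sub_rpow n m _ ht.1,
    integral_mul_const, ← integral_Ioc_eq_integral_Ioo,
    ← intervalIntegral.integral_of_le zero_le_one, integral_rpow (.inl hexp),
    show (n : ℝ) + m + (2 * H - 2) + 1 + 1 = n + m + 2 * H by ring, one_rpow, zero_rpow hpos.ne']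
  ring

lemma rhoNM_sub_rhoNM_succ_eq {H : ℝ} (hH : 1 / 2 < H) (n m : ℕ) :
    rhoNM H n m - rhoNM H (n + 1) m
      = betaPow n (2 * H - 2) / ((n + m + 2 * H) * (n + m + 1 + 2 * H))
        + betaPow n (2 * H - 1) / (n + m + 1 + 2 * H) := by
  have hsplit := betaPow_eq_betaPow_succ_add (r := 2 * H - 2) (by linarith) n
  rw [show 2 * H - 2 + 1 = 2 * H - 1 by ring] at hsplit
  rw [rhoNM_eq (by linarith), rhoNM_eq (by linarith), hsplit]
  push_cast
  field_simp
  ring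

lemma rhoNM_le {H : ℝ} (hH : 1 / 2 < H) {n : ℕ} (hn : 0 < n) (m : ℕ) :
    rhoNM H n m ≤ Gamma (2 * H - 1) * (n : ℝ) ^ (-(2 * H)) := by
  have hN : (0 : ℝ) < n := Nat.cast_pos.2 hn
  have hG := Gamma_pos_of_pos (by linarith : 0 < 2 * H - 1)
  have hB := betaPow_le_Gamma_mul_rpow (a := 2 * H - 1) (by linarith) hn
  rw [show 2 * H - 1 - 1 = 2 * H - 2 by ring] at hB
  calc rhoNM H n m = betaPow n (2 * H - 2) / (n + m + 2 * H) := rhoNM_eq (by linarith) n m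
    _ ≤ Gamma (2 * H - 1) * (n : ℝ) ^ (-(2 * H - 1)) / n :=
      div_le_div₀ (by positivity) hB hN (by linarith [(m.cast_nonneg : (0 : ℝ) ≤ m)])
    _ = Gamma (2 * H - 1) * (n : ℝ) ^ (-(2 * H)) := by
      rw [mul_div_assoc, ← rpow_sub_one hN.ne']; ring_nf

lemma rhoNM_sub_rhoNM_succ_nonneg {H : ℝ} (hH : 1 / 2 < H) (n m : ℕ) :
    0 ≤ rhoNM H n m - rhoNM H (n + 1) m := by
  have hB₁ := betaPow_nonneg n (2 * H - 2)
  have hB₂ := betaPow_nonneg n (2 * H - 1)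
  rw [rhoNM_sub_rhoNM_succ_eq hH]
  positivity

lemma rhoNM_sub_rhoNM_succ_le {H : ℝ} (hH : 1 / 2 < H) {n : ℕ} (hn : 0 < n) (m : ℕ) :
    rhoNM H n m - rhoNM H (n + 1) m
      ≤ (Gamma (2 * H - 1) + Gamma (2 * H)) * (n : ℝ) ^ (-(2 * H) - 1) := by
  have hN : (0 : ℝ) < n := Nat.cast_pos.2 hn
  have hm : (0 : ℝ) ≤ m := m.cast_nonneg
  have hG₁ := Gamma_pos_of_pos (by linarith : 0 < 2 * H - 1)
  have hG₂ := Gamma_pos_of_pos (by linarith : 0 < 2 * H)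
  have hB₁ := betaPow_le_Gamma_mul_rpow (a := 2 * H - 1) (by linarith) hn
  have hB₂ := betaPow_le_Gamma_mul_rpow (a := 2 * H) (by linarith) hn
  rw [show 2 * H - 1 - 1 = 2 * H - 2 by ring] at hB₁
  have hpow₁ : (n : ℝ) ^ (-(2 * H - 1)) / (n * n) = (n : ℝ) ^ (-(2 * H) - 1) := by
    rw [← div_div, ← rpow_sub_one hN.ne', ← rpow_sub_one hN.ne']; ring_nf
  have hpow₂ : (n : ℝ) ^ (-(2 * H)) / n = (n : ℝ) ^ (-(2 * H) - 1) :=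
    (rpow_sub_one hN.ne' _).symm
  have hD : (n : ℝ) * n ≤ (n + m + 2 * H) * (n + m + 1 + 2 * H) := by
    gcongr <;> linarith
  calc rhoNM H n m - rhoNM H (n + 1) m
      = betaPow n (2 * H - 2) / ((n + m + 2 * H) * (n + m + 1 + 2 * H))
        + betaPow n (2 * H - 1) / (n + m + 1 + 2 * H) := rhoNM_sub_rhoNM_succ_eq hH n m
    _ ≤ Gamma (2 * H - 1) * (n : ℝ) ^ (-(2 * H - 1)) / (n * n)
        + Gamma (2 * H) * (n : ℝ) ^ (-(2 * H)) / n :=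
      add_le_add (div_le_div₀ (by positivity) hB₁ (by positivity) hD)
        (div_le_div₀ (by positivity) hB₂ hN (by linarith))
    _ = (Gamma (2 * H - 1) + Gamma (2 * H)) * (n : ℝ) ^ (-(2 * H) - 1) := by
      rw [mul_div_assoc, mul_div_assoc, hpow₁, hpow₂]; ring

theorem rho_asymptotics (H : ℝ) (hH : H ∈ Set.Ioo (1 / 2 : ℝ) 1) :
    ∃ C : ℝ, 0 < C ∧ ∀ n : ℕ, 1 ≤ n →
      rhoNM H n n ≤ C * (n : ℝ) ^ (-(2 * H)) ∧
      0 ≤ rhoNM H n n - rhoNM H (n + 1) n ∧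
      rhoNM H n n - rhoNM H (n + 1) n ≤ C * (n : ℝ) ^ (-(2 * H) - 1) := by
  have hH₁ : 1 / 2 < H := hH.1
  have hG₁ := Gamma_pos_of_pos (by linarith : 0 < 2 * H - 1)
  have hG₂ := Gamma_pos_of_pos (by linarith : 0 < 2 * H)
  refine ⟨Gamma (2 * H - 1) + Gamma (2 * H), by positivity, fun n hn => ⟨?_,
    rhoNM_sub_rhoNM_succ_nonneg hH₁ n n, rhoNM_sub_rhoNM_succ_le hH₁ hn n⟩⟩
  calc rhoNM H n n ≤ Gamma (2 * H - 1) * (n : ℝ) ^ (-(2 * H)) := rhoNM_le hH₁ hn n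
    _ ≤ (Gamma (2 * H - 1) + Gamma (2 * H)) * (n : ℝ) ^ (-(2 * H)) := by
      gcongr
      linarith
end

section
/- Let H ∈ (1/2, 1). There exists a constant C_H > 0, depending only on H, such that for every integer n ≥ 1: | 2·n^{2H}·Γ(n+1) / ( Γ(n+2H)·(2n+2H) ) − 1 | ≤ C_H / n, where Γ denotes the Gamma function. -/
/-!
Log-convexity of `Γ` between `x` and `x + 1`, together with `Γ (x + 1) = x Γ x`, gives Gautschi's
bounds `x ^ (1 - s) ≤ Γ (x + 1) / Γ (x + s) ≤ (x + s) ^ (1 - s)` for `0 < s < 1`. With `s = 2H - 1`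
and `Γ (n + 2H) = (n + s) Γ (n + s)` they squeeze the ratio between `2n² / ((n + s)(2n + 2H))` and
`2n / (2n + 2H)`, both of which are `1 + O(1/n)`.
-/

open Real

namespace Real

theorem Gamma_add_le_Gamma_mul_rpow {x s : ℝ} (hx : 0 < x) (hs0 : 0 < s) (hs1 : s < 1) :
    Gamma (x + s) ≤ Gamma x * x ^ s := by
  have hconv := Gamma_mul_add_mul_le_rpow_Gamma_mul_rpow_Gamma hx (by linarith : 0 < x + 1)
    (sub_pos.2 hs1) hs0 (sub_add_cancel 1 s)
  have hΓ := Gamma_pos_of_pos hx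
  calc Gamma (x + s) = Gamma ((1 - s) * x + s * (x + 1)) := by ring_nf
    _ ≤ Gamma x ^ (1 - s) * Gamma (x + 1) ^ s := hconv
    _ = Gamma x * x ^ s := by
      rw [Gamma_add_one hx.ne', mul_rpow hx.le hΓ.le, mul_left_comm, ← rpow_add hΓ,
        sub_add_cancel, rpow_one, mul_comm]

theorem Gamma_add_one_le_Gamma_add_mul_rpow {x s : ℝ} (hx : 0 < x) (hs0 : 0 < s) (hs1 : s < 1) :
    Gamma (x + 1) ≤ Gamma (x + s) * (x + s) ^ (1 - s) := by
  simpa using Gamma_add_le_Gamma_mul_rpow (by linarith : 0 < x + s) (sub_pos.2 hs1)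
    (by linarith : 1 - s < 1)

end Real

theorem abs_two_mul_div_sub_one_le {x s G N : ℝ} (hx : 1 ≤ x) (hs0 : 0 ≤ s) (hs1 : s ≤ 1)
    (hG : 0 < G) (hlow : x ^ 2 * G ≤ N) (hup : N ≤ x * (x + s) * G) :
    |2 * N / ((x + s) * G * (2 * x + (s + 1))) - 1| ≤ 3 / x := by
  have hD : 0 < (x + s) * G * (2 * x + (s + 1)) := by positivity
  have hx0 : 0 < x := by linarith
  have h3x : 3 / x * x = 3 := div_mul_cancel₀ 3 hx0.ne'
  have hquad : (1 - 3 / x) * ((x + s) * (2 * x + (s + 1))) ≤ 2 * x ^ 2 := by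
    nlinarith [div_pos three_pos hx0, mul_nonneg (div_pos three_pos hx0).le hs0]
  rw [abs_le, le_sub_iff_add_le, sub_le_iff_le_add, div_le_iff₀ hD, le_div_iff₀ hD]
  constructor
  · nlinarith
  · nlinarith [div_pos three_pos hx0]

theorem abs_two_mul_rpow_mul_Gamma_div_sub_one_le {x a : ℝ} (hx : 1 ≤ x) (ha1 : 1 < a)
    (ha2 : a < 2) :
    |2 * x ^ a * Gamma (x + 1) / (Gamma (x + a) * (2 * x + a)) - 1| ≤ 3 / x := by
  obtain ⟨s, rfl⟩ : ∃ s, a = s + 1 := ⟨a - 1, by ring⟩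
  have hx0 : 0 < x := by linarith
  have hs0 : 0 < s := by linarith
  have hs1 : s < 1 := by linarith
  have hxs : 0 < x + s := by linarith
  have hpow : x ^ (s + 1) = x ^ s * x := by rw [rpow_add hx0, rpow_one]
  have hG := Gamma_pos_of_pos hxs
  rw [← add_assoc, Gamma_add_one hxs.ne', mul_assoc 2]
  refine abs_two_mul_div_sub_one_le hx hs0.le hs1.le hG ?_ ?_
  · calc x ^ 2 * Gamma (x + s) ≤ x ^ 2 * (Gamma x * x ^ s) := by
          gcongr; exact Gamma_add_le_Gamma_mul_rpow hx0 hs0 hs1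
      _ = x ^ (s + 1) * Gamma (x + 1) := by rw [hpow, Gamma_add_one hx0.ne']; ring
  · calc x ^ (s + 1) * Gamma (x + 1) ≤ x ^ (s + 1) * (Gamma (x + s) * (x + s) ^ (1 - s)) := by
          gcongr; exact Gamma_add_one_le_Gamma_add_mul_rpow hx0 hs0 hs1
      _ = x * (x ^ s * (x + s) ^ (1 - s)) * Gamma (x + s) := by rw [hpow]; ring
      _ ≤ x * ((x + s) ^ s * (x + s) ^ (1 - s)) * Gamma (x + s) := by
          gcongr; linarith
      _ = x * (x + s) * Gamma (x + s) := by rw [← rpow_add hxs, add_sub_cancel, rpow_one]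

theorem stirling_ratio_rate (H : ℝ) (hH : H ∈ Set.Ioo (1 / 2 : ℝ) 1) :
    ∃ C : ℝ, 0 < C ∧ ∀ n : ℕ, 1 ≤ n →
      |2 * (n : ℝ) ^ (2 * H) * Real.Gamma (n + 1)
          / (Real.Gamma (n + 2 * H) * (2 * n + 2 * H)) - 1| ≤ C / n := by
  obtain ⟨hH1, hH2⟩ := hH
  exact ⟨3, three_pos, fun n hn => abs_two_mul_rpow_mul_Gamma_div_sub_one_le
    (by exact_mod_cast hn) (by linarith) (by linarith)⟩
end

section
/- Let H ∈ (1/2, 1). There exists a constant C_H > 0, depending only on H, such that for every integer n ≥ 1: ∫₀¹ ∫₀ᵗ s^n t^n (1−s)^H (t−s)^{2H−2} ds dt ≤ C_H · n^{−3H}. -/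
/-!
Write `s ^ n = s ^ k * s ^ m` with `k` and `m + 1` at least `n / 2`. The factor
`s ^ k * (1 - s) ^ H` is at most `k ^ (-H)`. In the rest, `∫₀ᵗ s ^ m (t - s) ^ (2H - 2) ds`, bound
`(t - s) ^ (2H - 2)` by `n ^ (2 - 2H)` where `t - s ≥ 1 / n` (and `s ^ m` has integral at most
`1 / (m + 1)`), and `s ^ m` by `1` where `t - s < 1 / n`; both parts are `O(n ^ (1 - 2H))`.
Finally `t ^ n` has integral `1 / (n + 1)`, and `n ^ (-H) * n ^ (1 - 2H) * n⁻¹ = n ^ (-3H)`.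
-/

open MeasureTheory Set

/-- With `y = k (1 - x)`, this is `x ^ k ≤ exp (-y)` combined with `y ^ a ≤ exp y`. -/
lemma pow_mul_one_sub_rpow_le {a x : ℝ} (ha0 : 0 ≤ a) (ha1 : a ≤ 1) (hx0 : 0 ≤ x) (hx1 : x ≤ 1)
    {k : ℕ} (hk : 0 < k) :
    x ^ k * (1 - x) ^ a ≤ (k : ℝ) ^ (-a) := by
  have hk0 : (0 : ℝ) < k := by exact_mod_cast hk
  set y : ℝ := k * (1 - x)
  have hy0 : 0 ≤ y := mul_nonneg hk0.le (by linarith)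
  have hpow : x ^ k ≤ Real.exp (-y) :=
    calc x ^ k ≤ Real.exp (x - 1) ^ k :=
          pow_le_pow_left₀ hx0 (by linarith [Real.add_one_le_exp (x - 1)]) k
      _ = Real.exp (-y) := by rw [← Real.exp_nat_mul]; congr 1; ring
  have hrpow : y ^ a ≤ Real.exp y := by
    rcases le_or_gt y 1 with h | h
    · exact (Real.rpow_le_one hy0 h ha0).trans (Real.one_le_exp hy0)
    · calc y ^ a ≤ y ^ (1 : ℝ) := Real.rpow_le_rpow_of_exponent_le h.le ha1
        _ ≤ Real.exp y := by rw [Real.rpow_one]; linarith [Real.add_one_le_exp y]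
  have hscale : (1 - x) ^ a = y ^ a * (k : ℝ) ^ (-a) := by
    rw [Real.mul_rpow hk0.le (by linarith), Real.rpow_neg hk0.le,
      mul_comm ((k : ℝ) ^ a), mul_assoc, mul_inv_cancel₀ (by positivity), mul_one]
  calc x ^ k * (1 - x) ^ a ≤ Real.exp (-y) * (Real.exp y * (k : ℝ) ^ (-a)) := by
        rw [hscale]
        gcongr
    _ = (k : ℝ) ^ (-a) := by
        rw [← mul_assoc, ← Real.exp_add, neg_add_cancel, Real.exp_zero, one_mul]

lemma pow_mul_one_sub_rpow_mul_sub_rpow_nonneg {a b s t : ℝ} (hs0 : 0 ≤ s) (hst : s ≤ t)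
    (ht1 : t ≤ 1) (n : ℕ) :
    0 ≤ s ^ n * (1 - s) ^ a * (t - s) ^ b := by
  have h1s : 0 ≤ (1 - s) ^ a := Real.rpow_nonneg (by linarith) a
  have hts : 0 ≤ (t - s) ^ b := Real.rpow_nonneg (by linarith) b
  positivity

lemma intervalIntegrable_sub_rpow {a : ℝ} (ha : -1 < a) (c t : ℝ) :
    IntervalIntegrable (fun s => (t - s) ^ a) volume c t := by
  simpa using ((intervalIntegral.intervalIntegrable_rpow' ha (a := 0) (b := t - c)).comp_sub_left
    t).symm

lemma integral_Ioo_sub_rpow {a c t : ℝ} (ha : -1 < a) (hct : c ≤ t) :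
    ∫ s in Ioo c t, (t - s) ^ a = (t - c) ^ (a + 1) / (a + 1) := by
  rw [← integral_Ioc_eq_integral_Ioo, ← intervalIntegral.integral_of_le hct,
    intervalIntegral.integral_comp_sub_left (fun x : ℝ => x ^ a) t, sub_self,
    integral_rpow (Or.inl ha), Real.zero_rpow (by linarith), sub_zero]

lemma integral_Ioo_zero_pow (m : ℕ) {t : ℝ} (ht : 0 ≤ t) :
    ∫ s in Ioo 0 t, s ^ m = t ^ (m + 1) / (m + 1) := by
  rw [← integral_Ioc_eq_integral_Ioo, ← intervalIntegral.integral_of_le ht, integral_pow]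
  simp

lemma integrableOn_pow_mul_sub_rpow {b t : ℝ} (hb : -1 < b) (ht : 0 ≤ t) (m : ℕ) :
    IntegrableOn (fun s => s ^ m * (t - s) ^ b) (Ioo 0 t) :=
  (intervalIntegrable_iff_integrableOn_Ioo_of_le ht).mp <|
    (intervalIntegrable_sub_rpow hb 0 t).continuousOn_mul (continuous_pow m).continuousOn

lemma integral_pow_mul_sub_rpow_le {b δ t : ℝ} (hb : -1 < b) (hb0 : b ≤ 0) (hδ : 0 < δ)
    (ht0 : 0 ≤ t) (ht1 : t ≤ 1) (m : ℕ) :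
    ∫ s in Ioo 0 t, s ^ m * (t - s) ^ b ≤ δ ^ b / (m + 1) + δ ^ (b + 1) / (b + 1) := by
  set E := Ioo (t - δ) t
  have hE : IntegrableOn (fun s => (t - s) ^ b) E :=
    (intervalIntegrable_iff_integrableOn_Ioo_of_le (by linarith)).mp
      (intervalIntegrable_sub_rpow hb _ t)
  have hEind : Integrable (E.indicator fun s => (t - s) ^ b) :=
    hE.integrable_indicator measurableSet_Ioo
  have hpow : IntegrableOn (fun s : ℝ => s ^ m) (Ioo 0 t) :=
    (intervalIntegrable_iff_integrableOn_Ioo_of_le ht0).mp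
      (intervalIntegral.intervalIntegrable_pow m)
  have hsplit : ∀ s ∈ Ioo 0 t,
      s ^ m * (t - s) ^ b ≤ δ ^ b * s ^ m + E.indicator (fun s => (t - s) ^ b) s := by
    rintro s ⟨hs0, hst⟩
    have hsm : 0 ≤ s ^ m := pow_nonneg hs0.le m
    by_cases hsE : s ∈ E
    · have hsm1 : s ^ m ≤ 1 := pow_le_one₀ hs0.le (by linarith)
      rw [indicator_of_mem hsE]
      nlinarith [Real.rpow_nonneg (sub_nonneg.2 hst.le) b, Real.rpow_nonneg hδ.le b]
    · have hδs : δ ≤ t - s := by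
        by_contra h
        exact hsE ⟨by linarith, hst⟩
      rw [indicator_of_notMem hsE, add_zero, mul_comm (δ ^ b)]
      exact mul_le_mul_of_nonneg_left (Real.rpow_le_rpow_of_nonpos hδ hδs hb0) hsm
  calc ∫ s in Ioo 0 t, s ^ m * (t - s) ^ b
      ≤ ∫ s in Ioo 0 t, (δ ^ b * s ^ m + E.indicator (fun s => (t - s) ^ b) s) :=
        setIntegral_mono_on (integrableOn_pow_mul_sub_rpow hb ht0 m)
          ((hpow.const_mul _).add hEind.integrableOn) measurableSet_Ioo hsplit
    _ = δ ^ b * (∫ s in Ioo 0 t, s ^ m)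
          + ∫ s in Ioo 0 t, E.indicator (fun s => (t - s) ^ b) s := by
        rw [integral_add (hpow.const_mul _) hEind.integrableOn, integral_const_mul]
    _ ≤ δ ^ b * (1 / (m + 1)) + ∫ s in E, (t - s) ^ b := by
        gcongr
        · rw [integral_Ioo_zero_pow m ht0]
          gcongr
          exact pow_le_one₀ ht0 ht1
        · refine (setIntegral_le_integral hEind (Filter.Eventually.of_forall fun s => ?_)).trans_eq
            (integral_indicator measurableSet_Ioo)
          exact indicator_nonneg (fun s hs => Real.rpow_nonneg (sub_nonneg.2 hs.2.le) b) s
    _ = δ ^ b / (m + 1) + δ ^ (b + 1) / (b + 1) := by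
        rw [integral_Ioo_sub_rpow hb (by linarith), sub_sub_cancel, mul_one_div]

lemma integral_pow_add_mul_one_sub_rpow_mul_sub_rpow_le {a b δ t : ℝ} (ha0 : 0 ≤ a) (ha1 : a ≤ 1)
    (hb : -1 < b) (hb0 : b ≤ 0) (hδ : 0 < δ) (ht0 : 0 ≤ t) (ht1 : t ≤ 1) {k : ℕ} (hk : 0 < k)
    (m : ℕ) :
    ∫ s in Ioo 0 t, s ^ (k + m) * (1 - s) ^ a * (t - s) ^ b
      ≤ (k : ℝ) ^ (-a) * (δ ^ b / (m + 1) + δ ^ (b + 1) / (b + 1)) := by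
  have hpointwise : ∀ s ∈ Ioo 0 t, 0 ≤ s ^ (k + m) * (1 - s) ^ a * (t - s) ^ b ∧
      s ^ (k + m) * (1 - s) ^ a * (t - s) ^ b ≤ (k : ℝ) ^ (-a) * (s ^ m * (t - s) ^ b) := by
    rintro s ⟨hs0, hst⟩
    refine ⟨pow_mul_one_sub_rpow_mul_sub_rpow_nonneg hs0.le hst.le ht1 _, ?_⟩
    have hts : 0 ≤ (t - s) ^ b := Real.rpow_nonneg (by linarith) b
    have hsk := pow_mul_one_sub_rpow_le ha0 ha1 hs0.le (by linarith) hk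
    calc s ^ (k + m) * (1 - s) ^ a * (t - s) ^ b
        = (s ^ k * (1 - s) ^ a) * (s ^ m * (t - s) ^ b) := by ring
      _ ≤ (k : ℝ) ^ (-a) * (s ^ m * (t - s) ^ b) := by gcongr
  calc ∫ s in Ioo 0 t, s ^ (k + m) * (1 - s) ^ a * (t - s) ^ b
      ≤ ∫ s in Ioo 0 t, (k : ℝ) ^ (-a) * (s ^ m * (t - s) ^ b) :=
        integral_mono_of_nonneg
          (ae_restrict_of_forall_mem measurableSet_Ioo fun s hs => (hpointwise s hs).1)
          ((integrableOn_pow_mul_sub_rpow hb ht0 m).const_mul _)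
          (ae_restrict_of_forall_mem measurableSet_Ioo fun s hs => (hpointwise s hs).2)
    _ ≤ (k : ℝ) ^ (-a) * (δ ^ b / (m + 1) + δ ^ (b + 1) / (b + 1)) := by
        rw [integral_const_mul]
        gcongr
        exact integral_pow_mul_sub_rpow_le hb hb0 hδ ht0 ht1 m

lemma setIntegral_Ioo_zero_one_le_of_le_pow_mul {F : ℝ → ℝ} {B : ℝ} (n : ℕ)
    (hF0 : ∀ t ∈ Ioo (0 : ℝ) 1, 0 ≤ F t) (hF : ∀ t ∈ Ioo (0 : ℝ) 1, F t ≤ t ^ n * B) :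
    ∫ t in Ioo 0 1, F t ≤ B / (n + 1) := by
  calc ∫ t in Ioo 0 1, F t ≤ ∫ t in Ioo 0 1, t ^ n * B :=
        integral_mono_of_nonneg (ae_restrict_of_forall_mem measurableSet_Ioo hF0)
          (((intervalIntegrable_iff_integrableOn_Ioo_of_le zero_le_one).mp
            (intervalIntegral.intervalIntegrable_pow n)).mul_const B)
          (ae_restrict_of_forall_mem measurableSet_Ioo hF)
    _ = B / (n + 1) := by
        rw [integral_mul_const, integral_Ioo_zero_pow n zero_le_one, one_pow, one_div_mul_eq_div]

lemma integral_pow_mul_one_sub_rpow_mul_sub_rpow_le {a b t : ℝ} (ha0 : 0 ≤ a) (ha1 : a ≤ 1)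
    (hb : -1 < b) (hb0 : b ≤ 0) (ht0 : 0 ≤ t) (ht1 : t ≤ 1) {n : ℕ} (hn : 0 < n) :
    ∫ s in Ioo 0 t, s ^ n * (1 - s) ^ a * (t - s) ^ b
      ≤ 2 ^ a * (2 + 1 / (b + 1)) * (n : ℝ) ^ (-(a + b + 1)) := by
  have hx : (0 : ℝ) < n := by exact_mod_cast hn
  have hb1 : 0 < b + 1 := by linarith
  set k := n - n / 2
  set m := n / 2
  have hkn : (n : ℝ) ≤ 2 * k := by exact_mod_cast (by omega : n ≤ 2 * k)
  have hmn : (n : ℝ) ≤ 2 * (m + 1) := by exact_mod_cast (by omega : n ≤ 2 * (m + 1))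
  have hsplit := integral_pow_add_mul_one_sub_rpow_mul_sub_rpow_le ha0 ha1 hb hb0
    (inv_pos.2 hx) ht0 ht1 (by omega : 0 < k) m
  rw [show k + m = n by omega, Real.inv_rpow hx.le, Real.inv_rpow hx.le,
    ← Real.rpow_neg hx.le, ← Real.rpow_neg hx.le] at hsplit
  have hk : (k : ℝ) ^ (-a) ≤ 2 ^ a * (n : ℝ) ^ (-a) :=
    calc (k : ℝ) ^ (-a) ≤ ((n : ℝ) / 2) ^ (-a) :=
          Real.rpow_le_rpow_of_nonpos (by positivity) (by linarith) (by linarith)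
      _ = 2 ^ a * (n : ℝ) ^ (-a) := by
          rw [Real.div_rpow hx.le zero_le_two, Real.rpow_neg zero_le_two, div_inv_eq_mul, mul_comm]
  have hfar : (n : ℝ) ^ (-b) / (m + 1) ≤ 2 * (n : ℝ) ^ (-(b + 1)) := by
    rw [div_le_iff₀ (by positivity), show -b = -(b + 1) + 1 by ring, Real.rpow_add hx,
      Real.rpow_one]
    nlinarith [Real.rpow_nonneg hx.le (-(b + 1))]
  refine hsplit.trans ?_
  calc (k : ℝ) ^ (-a) * ((n : ℝ) ^ (-b) / (m + 1) + (n : ℝ) ^ (-(b + 1)) / (b + 1))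
      ≤ 2 ^ a * (n : ℝ) ^ (-a)
          * (2 * (n : ℝ) ^ (-(b + 1)) + (n : ℝ) ^ (-(b + 1)) / (b + 1)) := by
        gcongr
    _ = 2 ^ a * (2 + 1 / (b + 1)) * (n : ℝ) ^ (-(a + b + 1)) := by
        rw [show -(a + b + 1) = -a + -(b + 1) by ring, Real.rpow_add hx]
        ring

theorem weighted_double_integral_rate (H : ℝ) (hH : H ∈ Set.Ioo (1 / 2 : ℝ) 1) :
    ∃ C : ℝ, 0 < C ∧ ∀ n : ℕ, 1 ≤ n →
      (∫ t in Set.Ioo (0 : ℝ) 1, ∫ s in Set.Ioo (0 : ℝ) t,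
          s ^ n * t ^ n * (1 - s) ^ H * (t - s) ^ (2 * H - 2))
        ≤ C * (n : ℝ) ^ (-(3 * H)) := by
  obtain ⟨hH1, hH2⟩ := hH
  have hb : 0 < 2 * H - 2 + 1 := by linarith
  refine ⟨2 ^ H * (2 + 1 / (2 * H - 2 + 1)), by positivity, fun n hn => ?_⟩
  have hn0 : (0 : ℝ) < n := by exact_mod_cast hn
  have hinner (t : ℝ) : ∫ s in Ioo 0 t, s ^ n * t ^ n * (1 - s) ^ H * (t - s) ^ (2 * H - 2)
      = t ^ n * ∫ s in Ioo 0 t, s ^ n * (1 - s) ^ H * (t - s) ^ (2 * H - 2) := by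
    rw [← integral_const_mul]
    congr with s
    ring
  calc _ ≤ 2 ^ H * (2 + 1 / (2 * H - 2 + 1)) * (n : ℝ) ^ (-(H + (2 * H - 2) + 1)) / (n + 1) := by
        refine setIntegral_Ioo_zero_one_le_of_le_pow_mul n (fun t ht => ?_) (fun t ht => ?_) <;>
          rw [hinner]
        · refine mul_nonneg (pow_nonneg ht.1.le n) (setIntegral_nonneg measurableSet_Ioo ?_)
          exact fun s hs => pow_mul_one_sub_rpow_mul_sub_rpow_nonneg hs.1.le hs.2.le ht.2.le n
        · exact mul_le_mul_of_nonneg_left (integral_pow_mul_one_sub_rpow_mul_sub_rpow_le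
            (by linarith) hH2.le (by linarith) (by linarith) ht.1.le ht.2.le hn)
            (pow_nonneg ht.1.le n)
    _ ≤ 2 ^ H * (2 + 1 / (2 * H - 2 + 1)) * (n : ℝ) ^ (-(3 * H)) := by
        rw [div_le_iff₀ (by positivity), show -(H + (2 * H - 2) + 1) = -(3 * H) + 1 by ring,
          Real.rpow_add hn0, Real.rpow_one]
        have : 0 ≤ 2 ^ H * (2 + 1 / (2 * H - 2 + 1)) * (n : ℝ) ^ (-(3 * H)) := by positivity
        linarith
end

section
/- Let (Ω, P) be a probability space and let B : [0,1] × Ω → ℝ be a jointly measurable process such that each B_s is square-integrable and E[B_s B_t] = min(s,t) for all s,t ∈ [0,1]. Then for every integer n ≥ 1: E[ | n·∫₀¹ s^{2n} B_s² ds − B_1²/2 | ] ≤ 1/√(2n) + 1/(4n). -/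
/-!
Write `m = 2n`. Since `∫₀¹ s^m ds = 1/(m+1)`, the quantity `n ∫₀¹ s^m B_s² ds - B_1²/2` equals
`n ∫₀¹ s^m (B_s² - B_1²) ds - B_1²/(2(m+1))`. By Cauchy–Schwarz and the covariance,
`E|B_s² - B_1²| ≤ ‖B_s + B_1‖₂ ‖B_s - B_1‖₂ = √(1+3s) √(1-s) ≤ 2√(1-s)`, so by Fubini the first
term has expectation at most `2n ∫₀¹ s^m √(1-s) ds ≤ 2n / ((m+1) √(m+2)) ≤ 1/√(2n)`, and the
second has expectation `1/(2(2n+1)) ≤ 1/(4n)`.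
-/

open MeasureTheory ProbabilityTheory Set Function

lemma two_mul_sqrt_le_inv_add_mul {x c : ℝ} (hx : 0 ≤ x) (hc : 0 < c) :
    2 * √x ≤ c⁻¹ + c * x := by
  have hsquare : c⁻¹ + c * x - 2 * √x = c⁻¹ * (c * √x - 1) ^ 2 := by
    field_simp
    linear_combination (-c ^ 2) * Real.sq_sqrt hx
  have : 0 ≤ c⁻¹ * (c * √x - 1) ^ 2 := by positivity
  linarith

lemma setIntegral_Ioo_pow (m : ℕ) : ∫ s in Ioo (0 : ℝ) 1, s ^ m = 1 / (m + 1) := by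
  rw [← integral_Ioc_eq_integral_Ioo, ← intervalIntegral.integral_of_le zero_le_one,
    integral_pow]
  simp

lemma integrableOn_Ioo_pow (m : ℕ) : IntegrableOn (fun s : ℝ => s ^ m) (Ioo 0 1) :=
  (continuous_pow m).continuousOn.integrableOn_Icc.mono_set Ioo_subset_Icc_self

lemma integrableOn_Ioo_pow_mul_sqrt_one_sub (m : ℕ) :
    IntegrableOn (fun s : ℝ => s ^ m * √(1 - s)) (Ioo 0 1) :=
  ((continuous_pow m).mul (Real.continuous_sqrt.comp (continuous_const.sub continuous_id)))
    |>.continuousOn.integrableOn_Icc.mono_set Ioo_subset_Icc_self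

-- `c = √(m+2)` is the slope for which the two terms of the majorant contribute equally.
lemma setIntegral_Ioo_pow_mul_sqrt_one_sub_le (m : ℕ) :
    ∫ s in Ioo (0 : ℝ) 1, s ^ m * √(1 - s) ≤ 1 / ((m + 1) * √(m + 2)) := by
  set c := √((m : ℝ) + 2)
  have hc : 0 < c := Real.sqrt_pos.2 (by positivity)
  have hc2 : c ^ 2 = m + 2 := Real.sq_sqrt (by positivity)
  have hmajor : ∀ s ∈ Ioo (0 : ℝ) 1, s ^ m * √(1 - s)
      ≤ (c⁻¹ + c) / 2 * s ^ m - c / 2 * s ^ (m + 1) := by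
    intro s hs
    have := two_mul_sqrt_le_inv_add_mul (sub_nonneg.2 hs.2.le) hc
    calc s ^ m * √(1 - s) ≤ s ^ m * ((c⁻¹ + c * (1 - s)) / 2) :=
          mul_le_mul_of_nonneg_left (by linarith) (pow_nonneg hs.1.le m)
      _ = (c⁻¹ + c) / 2 * s ^ m - c / 2 * s ^ (m + 1) := by ring
  calc ∫ s in Ioo (0 : ℝ) 1, s ^ m * √(1 - s)
      ≤ ∫ s in Ioo (0 : ℝ) 1, ((c⁻¹ + c) / 2 * s ^ m - c / 2 * s ^ (m + 1)) := by
        refine setIntegral_mono_on (integrableOn_Ioo_pow_mul_sqrt_one_sub m) ?_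
          measurableSet_Ioo hmajor
        exact ((integrableOn_Ioo_pow m).const_mul _).sub ((integrableOn_Ioo_pow _).const_mul _)
    _ = 1 / ((m + 1) * c) := by
        rw [integral_sub ((integrableOn_Ioo_pow m).const_mul _)
          ((integrableOn_Ioo_pow _).const_mul _), integral_const_mul, integral_const_mul,
          setIntegral_Ioo_pow, setIntegral_Ioo_pow]
        field_simp
        push_cast
        linear_combination hc2

lemma abs_setIntegral_pow_mul_sub_le {f : ℝ → ℝ} (m : ℕ)
    (hf : IntegrableOn (fun s => s ^ m * f s) (Ioo 0 1)) (y : ℝ) :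
    |(∫ s in Ioo (0 : ℝ) 1, s ^ m * f s) - y / (m + 1)|
      ≤ ∫ s in Ioo (0 : ℝ) 1, s ^ m * |f s - y| := by
  have hy : y / (m + 1) = ∫ s in Ioo (0 : ℝ) 1, s ^ m * y := by
    rw [integral_mul_const, setIntegral_Ioo_pow]; ring
  rw [hy, ← integral_sub hf ((integrableOn_Ioo_pow m).mul_const y)]
  refine (abs_integral_le_integral_abs).trans_eq (setIntegral_congr_fun measurableSet_Ioo ?_)
  intro s hs
  dsimp only
  rw [← mul_sub, abs_mul, abs_of_nonneg (pow_nonneg hs.1.le m)]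

lemma mul_two_div_mul_sqrt_add_le {x : ℝ} (hx : 0 < x) :
    x * (2 / ((2 * x + 1) * √(2 * x + 2))) + 1 / (2 * (2 * x + 1))
      ≤ 1 / √(2 * x) + 1 / (4 * x) := by
  have hmain : x * (2 / ((2 * x + 1) * √(2 * x + 2))) ≤ 1 / √(2 * x) :=
    calc x * (2 / ((2 * x + 1) * √(2 * x + 2))) = 2 * x / (2 * x + 1) * (1 / √(2 * x + 2)) := by
          field_simp
      _ ≤ 1 * (1 / √(2 * x)) := by
          gcongr
          · exact (div_le_one (by positivity)).2 (by linarith)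
          · linarith
      _ = 1 / √(2 * x) := one_mul _
  have hrest : 1 / (2 * (2 * x + 1)) ≤ 1 / (4 * x) :=
    one_div_le_one_div_of_le (by positivity) (by linarith)
  linarith

lemma abs_mul_sub_half_le {n x y : ℝ} (hn : 0 ≤ n) (hy : 0 ≤ y) :
    |n * x - y / 2| ≤ n * |x - y / (2 * n + 1)| + y / (2 * (2 * n + 1)) := by
  have hsplit : n * x - y / 2 = n * (x - y / (2 * n + 1)) - y / (2 * (2 * n + 1)) := by
    field_simp
    ring
  rw [hsplit]
  refine (abs_sub _ _).trans_eq ?_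
  rw [abs_mul, abs_of_nonneg hn, abs_of_nonneg (div_nonneg hy (by linarith))]

section SecondMoments

variable {Ω : Type*} [MeasurableSpace Ω] {μ : Measure Ω} {X Y : Ω → ℝ}

lemma integral_add_sq (hX : MemLp X 2 μ) (hY : MemLp Y 2 μ) :
    ∫ ω, (X ω + Y ω) ^ 2 ∂μ = ∫ ω, X ω ^ 2 ∂μ + 2 * ∫ ω, X ω * Y ω ∂μ + ∫ ω, Y ω ^ 2 ∂μ := by
  have hXY : Integrable (fun ω => X ω * Y ω) μ := hX.integrable_mul hY
  simp_rw [add_sq, mul_assoc]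
  rw [integral_add, integral_add, integral_const_mul]
  exacts [hX.integrable_sq, hXY.const_mul 2, hX.integrable_sq.add (hXY.const_mul 2),
    hY.integrable_sq]

lemma integral_sub_sq (hX : MemLp X 2 μ) (hY : MemLp Y 2 μ) :
    ∫ ω, (X ω - Y ω) ^ 2 ∂μ = ∫ ω, X ω ^ 2 ∂μ - 2 * ∫ ω, X ω * Y ω ∂μ + ∫ ω, Y ω ^ 2 ∂μ := by
  simpa [sub_eq_add_neg, integral_neg] using integral_add_sq hX hY.neg

lemma integral_abs_mul_le_sqrt_mul_sqrt (hX : MemLp X 2 μ) (hY : MemLp Y 2 μ) :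
    ∫ ω, |X ω * Y ω| ∂μ ≤ √(∫ ω, X ω ^ 2 ∂μ) * √(∫ ω, Y ω ^ 2 ∂μ) := by
  have h := integral_mul_le_Lp_mul_Lq_of_nonneg Real.HolderConjugate.two_two
    (Filter.Eventually.of_forall fun ω => abs_nonneg (X ω))
    (Filter.Eventually.of_forall fun ω => abs_nonneg (Y ω))
    (by rw [ENNReal.ofReal_ofNat]; exact hX.abs) (by rw [ENNReal.ofReal_ofNat]; exact hY.abs)
  simpa only [abs_mul, Real.rpow_two, sq_abs, Real.sqrt_eq_rpow, one_div] using h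

lemma integral_abs_sq_sub_sq_le (hX : MemLp X 2 μ) (hY : MemLp Y 2 μ) {s : ℝ} (hs : s ≤ 1)
    (hXX : ∫ ω, X ω ^ 2 ∂μ = s) (hXY : ∫ ω, X ω * Y ω ∂μ = s) (hYY : ∫ ω, Y ω ^ 2 ∂μ = 1) :
    ∫ ω, |X ω ^ 2 - Y ω ^ 2| ∂μ ≤ 2 * √(1 - s) := by
  have hsub : ∫ ω, (X ω - Y ω) ^ 2 ∂μ = 1 - s := by
    rw [integral_sub_sq hX hY, hXX, hXY, hYY]; ring
  have hadd : ∫ ω, (X ω + Y ω) ^ 2 ∂μ = 1 + 3 * s := by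
    rw [integral_add_sq hX hY, hXX, hXY, hYY]; ring
  calc ∫ ω, |X ω ^ 2 - Y ω ^ 2| ∂μ = ∫ ω, |(X ω + Y ω) * (X ω - Y ω)| ∂μ := by
        simp_rw [sq_sub_sq]
    _ ≤ √(1 + 3 * s) * √(1 - s) := by
        simpa only [Pi.add_apply, Pi.sub_apply, hsub, hadd] using
          integral_abs_mul_le_sqrt_mul_sqrt (hX.add hY) (hX.sub hY)
    _ ≤ 2 * √(1 - s) := by
        gcongr
        rw [Real.sqrt_le_left zero_le_two]
        linarith

end SecondMoments

lemma integrable_prod_of_ae_integral_norm_le {α β E : Type*} [MeasurableSpace α]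
    [MeasurableSpace β] [NormedAddCommGroup E] {μ : Measure α} {ν : Measure β}
    [IsFiniteMeasure μ] [SFinite ν] {f : α × β → E} (hf : AEStronglyMeasurable f (μ.prod ν))
    {C : ℝ} (h : ∀ᵐ x ∂μ, Integrable (fun y => f (x, y)) ν ∧ ∫ y, ‖f (x, y)‖ ∂ν ≤ C) :
    Integrable f (μ.prod ν) := by
  refine (integrable_prod_iff hf).2 ⟨h.mono fun _ => And.left, ?_⟩
  refine (integrable_const C).mono' hf.norm.integral_prod_right' ?_
  filter_upwards [h] with x hx
  rw [Real.norm_of_nonneg (integral_nonneg fun _ => norm_nonneg _)]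
  exact hx.2

lemma exists_measurable_uncurry_eq_on {α β γ : Type*} [MeasurableSpace α] [MeasurableSpace β]
    [MeasurableSpace γ] [Nonempty γ] {S : Set α} (hS : MeasurableSet S) {f : α → β → γ}
    (hf : Measurable fun p : S × β => f p.1 p.2) :
    ∃ F : α → β → γ, Measurable (uncurry F) ∧ ∀ a ∈ S, F a = f a := by
  let e : S × β → α × β := Prod.map (↑) id
  have he : MeasurableEmbedding e :=
    (MeasurableEmbedding.subtype_coe hS).prodMap MeasurableEmbedding.id
  refine ⟨curry (extend e (fun p => f p.1 p.2) fun _ => Classical.arbitrary γ),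
    he.measurable_extend hf measurable_const, fun a ha => funext fun b => ?_⟩
  exact he.injective.extend_apply _ _ (⟨a, ha⟩, b)

section JointlyMeasurableProcess

variable {Ω : Type*} [MeasurableSpace Ω] {μ : Measure Ω} {B : ℝ → Ω → ℝ}

lemma integral_abs_sq_sub_sq_one_le (hL2 : ∀ s ∈ Icc (0 : ℝ) 1, MemLp (B s) 2 μ)
    (hcov : ∀ s ∈ Icc (0 : ℝ) 1, ∀ t ∈ Icc (0 : ℝ) 1, ∫ ω, B s ω * B t ω ∂μ = min s t)
    {s : ℝ} (hs : s ∈ Icc (0 : ℝ) 1) :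
    ∫ ω, |B s ω ^ 2 - B 1 ω ^ 2| ∂μ ≤ 2 * √(1 - s) := by
  have h1 : (1 : ℝ) ∈ Icc (0 : ℝ) 1 := right_mem_Icc.2 zero_le_one
  refine integral_abs_sq_sub_sq_le (hL2 s hs) (hL2 1 h1) hs.2 ?_ ?_ ?_
  · simp_rw [sq, hcov s hs s hs, min_self]
  · rw [hcov s hs 1 h1, min_eq_left hs.2]
  · simp_rw [sq, hcov 1 h1 1 h1, min_self]

lemma integrable_prod_pow_mul_sq [SFinite μ] (hB : Measurable (uncurry B))
    (hL2 : ∀ s ∈ Icc (0 : ℝ) 1, MemLp (B s) 2 μ)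
    (hcov : ∀ s ∈ Icc (0 : ℝ) 1, ∀ t ∈ Icc (0 : ℝ) 1, ∫ ω, B s ω * B t ω ∂μ = min s t) (m : ℕ) :
    Integrable (fun p : ℝ × Ω => p.1 ^ m * B p.1 p.2 ^ 2)
      ((volume.restrict (Ioo 0 1)).prod μ) := by
  refine integrable_prod_of_ae_integral_norm_le
    ((measurable_fst.pow_const m).mul (hB.pow_const 2)).aestronglyMeasurable (C := 1) ?_
  filter_upwards [ae_restrict_mem measurableSet_Ioo] with s hs
  have hsI : s ∈ Icc (0 : ℝ) 1 := Ioo_subset_Icc_self hs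
  refine ⟨(hL2 s hsI).integrable_sq.const_mul _, ?_⟩
  have hnorm : ∀ ω, ‖s ^ m * B s ω ^ 2‖ = s ^ m * B s ω ^ 2 := fun ω =>
    Real.norm_of_nonneg (by have := pow_nonneg hs.1.le m; positivity)
  simp_rw [hnorm, integral_const_mul, sq, hcov s hsI s hsI, min_self]
  exact mul_le_one₀ (pow_le_one₀ hs.1.le hs.2.le) hs.1.le hs.2.le

lemma integrable_prod_pow_mul_abs_sq_sub_sq [SFinite μ] (hB : Measurable (uncurry B))
    (hL2 : ∀ s ∈ Icc (0 : ℝ) 1, MemLp (B s) 2 μ)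
    (hcov : ∀ s ∈ Icc (0 : ℝ) 1, ∀ t ∈ Icc (0 : ℝ) 1, ∫ ω, B s ω * B t ω ∂μ = min s t) (m : ℕ) :
    Integrable (fun p : ℝ × Ω => p.1 ^ m * |B p.1 p.2 ^ 2 - B 1 p.2 ^ 2|)
      ((volume.restrict (Ioo 0 1)).prod μ) := by
  have hB1 : Measurable fun p : ℝ × Ω => B 1 p.2 :=
    hB.comp (measurable_const.prodMk measurable_snd)
  refine integrable_prod_of_ae_integral_norm_le ((measurable_fst.pow_const m).mul
    ((hB.pow_const 2).sub (hB1.pow_const 2)).abs).aestronglyMeasurable (C := 2) ?_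
  filter_upwards [ae_restrict_mem measurableSet_Ioo] with s hs
  have hsI : s ∈ Icc (0 : ℝ) 1 := Ioo_subset_Icc_self hs
  have h1 : (1 : ℝ) ∈ Icc (0 : ℝ) 1 := right_mem_Icc.2 zero_le_one
  refine ⟨(((hL2 s hsI).integrable_sq.sub (hL2 1 h1).integrable_sq).abs).const_mul _, ?_⟩
  have hnorm : ∀ ω, ‖s ^ m * |B s ω ^ 2 - B 1 ω ^ 2|‖ = s ^ m * |B s ω ^ 2 - B 1 ω ^ 2| :=
    fun ω => Real.norm_of_nonneg (by have := pow_nonneg hs.1.le m; positivity)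
  simp_rw [hnorm, integral_const_mul]
  have hsqrt : √(1 - s) ≤ 1 := Real.sqrt_le_one.2 (by linarith [hs.1])
  calc s ^ m * ∫ ω, |B s ω ^ 2 - B 1 ω ^ 2| ∂μ ≤ 1 * (2 * 1) := by
        gcongr
        · exact pow_le_one₀ hs.1.le hs.2.le
        · exact (integral_abs_sq_sub_sq_one_le hL2 hcov hsI).trans (by linarith)
    _ = 2 := by norm_num

lemma integral_abs_setIntegral_pow_mul_sq_sub_le [SFinite μ] (hB : Measurable (uncurry B))
    (hL2 : ∀ s ∈ Icc (0 : ℝ) 1, MemLp (B s) 2 μ)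
    (hcov : ∀ s ∈ Icc (0 : ℝ) 1, ∀ t ∈ Icc (0 : ℝ) 1, ∫ ω, B s ω * B t ω ∂μ = min s t) (m : ℕ) :
    ∫ ω, |(∫ s in Ioo (0 : ℝ) 1, s ^ m * B s ω ^ 2) - B 1 ω ^ 2 / (m + 1)| ∂μ
      ≤ 2 / ((m + 1) * √(m + 2)) := by
  set G : ℝ × Ω → ℝ := fun p => p.1 ^ m * |B p.1 p.2 ^ 2 - B 1 p.2 ^ 2|
  have hG : Integrable G ((volume.restrict (Ioo 0 1)).prod μ) :=
    integrable_prod_pow_mul_abs_sq_sub_sq hB hL2 hcov m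
  have hpointwise : ∀ᵐ ω ∂μ, |(∫ s in Ioo (0 : ℝ) 1, s ^ m * B s ω ^ 2) - B 1 ω ^ 2 / (m + 1)|
      ≤ ∫ s in Ioo (0 : ℝ) 1, G (s, ω) := by
    filter_upwards [(integrable_prod_pow_mul_sq hB hL2 hcov m).prod_left_ae] with ω hω
    exact abs_setIntegral_pow_mul_sub_le m hω _
  calc ∫ ω, |(∫ s in Ioo (0 : ℝ) 1, s ^ m * B s ω ^ 2) - B 1 ω ^ 2 / (m + 1)| ∂μ
      ≤ ∫ ω, (∫ s in Ioo (0 : ℝ) 1, G (s, ω)) ∂μ :=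
        integral_mono_of_nonneg (.of_forall fun _ => abs_nonneg _) hG.integral_prod_right
          hpointwise
    _ = ∫ s in Ioo (0 : ℝ) 1, ∫ ω, G (s, ω) ∂μ :=
        (integral_prod_symm G hG).symm.trans (integral_prod G hG)
    _ ≤ ∫ s in Ioo (0 : ℝ) 1, 2 * (s ^ m * √(1 - s)) := by
        refine setIntegral_mono_on hG.integral_prod_left
          ((integrableOn_Ioo_pow_mul_sqrt_one_sub m).const_mul 2) measurableSet_Ioo
          fun s hs => ?_
        simp only [G, integral_const_mul, mul_left_comm (2 : ℝ)]
        exact mul_le_mul_of_nonneg_left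
          (integral_abs_sq_sub_sq_one_le hL2 hcov (Ioo_subset_Icc_self hs))
          (pow_nonneg hs.1.le m)
    _ ≤ 2 / ((m + 1) * √(m + 2)) := by
        rw [integral_const_mul, ← mul_one_div]
        gcongr
        exact setIntegral_Ioo_pow_mul_sqrt_one_sub_le m

theorem integral_abs_mul_setIntegral_pow_mul_sq_sub_le [SFinite μ] (hB : Measurable (uncurry B))
    (hL2 : ∀ s ∈ Icc (0 : ℝ) 1, MemLp (B s) 2 μ)
    (hcov : ∀ s ∈ Icc (0 : ℝ) 1, ∀ t ∈ Icc (0 : ℝ) 1, ∫ ω, B s ω * B t ω ∂μ = min s t)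
    {n : ℕ} (hn : 0 < n) :
    ∫ ω, |(n : ℝ) * (∫ s in Ioo (0 : ℝ) 1, s ^ (2 * n) * B s ω ^ 2) - B 1 ω ^ 2 / 2| ∂μ
      ≤ 1 / √(2 * n) + 1 / (4 * n) := by
  have h1 : (1 : ℝ) ∈ Icc (0 : ℝ) 1 := right_mem_Icc.2 zero_le_one
  have hX : Integrable (fun ω => ∫ s in Ioo (0 : ℝ) 1, s ^ (2 * n) * B s ω ^ 2) μ :=
    (integrable_prod_pow_mul_sq hB hL2 hcov (2 * n)).integral_prod_right
  have hB1 : Integrable (fun ω => B 1 ω ^ 2) μ := (hL2 1 h1).integrable_sq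
  have hEB1 : ∫ ω, B 1 ω ^ 2 ∂μ = 1 := by simp_rw [sq, hcov 1 h1 1 h1, min_self]
  have hdev := integral_abs_setIntegral_pow_mul_sq_sub_le hB hL2 hcov (2 * n)
  push_cast at hdev
  calc ∫ ω, |(n : ℝ) * (∫ s in Ioo (0 : ℝ) 1, s ^ (2 * n) * B s ω ^ 2) - B 1 ω ^ 2 / 2| ∂μ
      ≤ ∫ ω, ((n : ℝ) * |(∫ s in Ioo (0 : ℝ) 1, s ^ (2 * n) * B s ω ^ 2)
          - B 1 ω ^ 2 / (2 * n + 1)| + B 1 ω ^ 2 / (2 * (2 * n + 1))) ∂μ :=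
        integral_mono_of_nonneg (.of_forall fun _ => abs_nonneg _)
          (((hX.sub (hB1.div_const _)).abs.const_mul _).add (hB1.div_const _))
          (.of_forall fun ω => abs_mul_sub_half_le n.cast_nonneg (sq_nonneg _))
    _ = n * ∫ ω, |(∫ s in Ioo (0 : ℝ) 1, s ^ (2 * n) * B s ω ^ 2)
          - B 1 ω ^ 2 / (2 * n + 1)| ∂μ + 1 / (2 * (2 * n + 1)) := by
        rw [integral_add, integral_const_mul, integral_div, hEB1]
        exacts [(hX.sub (hB1.div_const _)).abs.const_mul _, hB1.div_const _]
    _ ≤ n * (2 / ((2 * n + 1) * √(2 * n + 2))) + 1 / (2 * (2 * n + 1)) := by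
        gcongr
    _ ≤ 1 / √(2 * n) + 1 / (4 * n) := mul_two_div_mul_sqrt_add_le (by exact_mod_cast hn)

end JointlyMeasurableProcess

theorem bm_quadratic_functional_L1_rate
    {Ω : Type*} [MeasureSpace Ω] [IsProbabilityMeasure (ℙ : Measure Ω)]
    (B : ℝ → Ω → ℝ)
    (hjm : Measurable fun p : Set.Icc (0 : ℝ) 1 × Ω => B (p.1 : ℝ) p.2)
    (hL2 : ∀ s ∈ Set.Icc (0 : ℝ) 1, MemLp (B s) 2 ℙ)
    (hcov : ∀ s ∈ Set.Icc (0 : ℝ) 1, ∀ t ∈ Set.Icc (0 : ℝ) 1,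
      ∫ ω, B s ω * B t ω ∂ℙ = min s t) :
    ∀ n : ℕ, 1 ≤ n →
      (∫ ω, |(n : ℝ) * (∫ s in Set.Ioo (0 : ℝ) 1, s ^ (2 * n) * (B s ω) ^ 2)
          - (B 1 ω) ^ 2 / 2| ∂ℙ)
        ≤ 1 / Real.sqrt (2 * n) + 1 / (4 * n) := by
  intro n hn
  obtain ⟨F, hF, hFB⟩ := exists_measurable_uncurry_eq_on measurableSet_Icc hjm
  have hbound := integral_abs_mul_setIntegral_pow_mul_sq_sub_le hF
    (fun s hs => by rw [hFB s hs]; exact hL2 s hs)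
    (fun s hs t ht => by rw [hFB s hs, hFB t ht]; exact hcov s hs t ht) hn
  refine le_of_eq_of_le (integral_congr_ae (.of_forall fun ω => ?_)) hbound
  rw [hFB 1 (right_mem_Icc.2 zero_le_one), setIntegral_congr_fun measurableSet_Ioo
    fun s hs => by rw [hFB s (Ioo_subset_Icc_self hs)]]
end
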